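/- arXiv:2306.11613 — 8 statements merged into one kernel-verified Lean document; each statement's English description precedes it below -/
import Mathlib

section
/- Let f : [0,1] → ℝ with |f(t)| ≤ M for all t, and suppose f is constant on an open interval (a,b) with 0 < a < b < 1. Then for every x ∈ (a,b) and every n ∈ ℕ, |B_n(f,x) − f(x)| ≤ 2M(exp(−n·H(a‖x)) + exp(−n·H(b‖x))), where H(p‖q) = p·ln(p/q) + (1−p)·ln((1−p)/(1−q)). -/
/-!
Subtracting the constant `c = f x`, the error `B_n(f,x) - f x` only involves the grid points
`k/n` outside `(a,b)`, and each contributes at most `2M` times its binomial weight. The weights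
of `k ≤ na` and of `k ≥ nb` are binomial tail probabilities, which the Chernoff bound with the
optimal exponential tilt `t = log (p(1-x) / (x(1-p)))` controls by `exp (-n H(p‖x))`.
-/

open Finset Real

noncomputable def bernsteinOp (n : ℕ) (f : ℝ → ℝ) (x : ℝ) : ℝ :=
  ∑ k ∈ Finset.range (n + 1), (n.choose k : ℝ) * f ((k : ℝ) / (n : ℝ)) * x ^ k * (1 - x) ^ (n - k)

noncomputable def klDiv (p q : ℝ) : ℝ :=
  p * Real.log (p / q) + (1 - p) * Real.log ((1 - p) / (1 - q))

noncomputable def bernsteinWeight (n k : ℕ) (x : ℝ) : ℝ :=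
  n.choose k * x ^ k * (1 - x) ^ (n - k)

lemma bernsteinWeight_nonneg (n k : ℕ) {x : ℝ} (hx0 : 0 ≤ x) (hx1 : x ≤ 1) :
    0 ≤ bernsteinWeight n k x := by
  have : 0 ≤ 1 - x := by linarith
  unfold bernsteinWeight
  positivity

lemma sum_bernsteinWeight_mul_exp (n : ℕ) (x t : ℝ) :
    ∑ k ∈ range (n + 1), bernsteinWeight n k x * exp (t * k) = (x * exp t + (1 - x)) ^ n := by
  rw [add_pow]
  refine sum_congr rfl fun k _ => ?_
  rw [bernsteinWeight, mul_comm t, exp_nat_mul, mul_pow]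
  ring

lemma sum_bernsteinWeight (n : ℕ) (x : ℝ) :
    ∑ k ∈ range (n + 1), bernsteinWeight n k x = 1 := by
  simpa using sum_bernsteinWeight_mul_exp n x 0

lemma bernsteinOp_sub_const (n : ℕ) (f : ℝ → ℝ) (x c : ℝ) :
    bernsteinOp n f x - c = ∑ k ∈ range (n + 1), bernsteinWeight n k x * (f (k / n) - c) := by
  conv_lhs => rw [← mul_one c, ← sum_bernsteinWeight n x, mul_sum, bernsteinOp, ← sum_sub_distrib]
  refine sum_congr rfl fun k _ => ?_
  rw [bernsteinWeight]
  ring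

lemma natCast_div_mem_Icc {k n : ℕ} (hk : k ≤ n) : (k : ℝ) / n ∈ Set.Icc 0 1 :=
  ⟨by positivity, div_le_one_of_le₀ (by exact_mod_cast hk) n.cast_nonneg⟩

lemma abs_bernsteinOp_sub_le {f : ℝ → ℝ} {c D : ℝ} {n : ℕ} {P : ℕ → Prop} [DecidablePred P]
    (hD : ∀ t ∈ Set.Icc (0 : ℝ) 1, |f t - c| ≤ D) (hP : ∀ k ≤ n, ¬ P k → f (k / n) = c)
    {x : ℝ} (hx0 : 0 ≤ x) (hx1 : x ≤ 1) :
    |bernsteinOp n f x - c| ≤ D * ∑ k ∈ range (n + 1) with P k, bernsteinWeight n k x := by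
  have hfar : ∀ k ∈ range (n + 1), |bernsteinWeight n k x * (f (k / n) - c)| ≠ 0 → P k := by
    intro k hk hne
    by_contra hPk
    simp [hP k (Nat.lt_succ_iff.mp (mem_range.mp hk)) hPk] at hne
  calc |bernsteinOp n f x - c|
      ≤ ∑ k ∈ range (n + 1), |bernsteinWeight n k x * (f (k / n) - c)| := by
        rw [bernsteinOp_sub_const]
        exact abs_sum_le_sum_abs _ _
    _ = ∑ k ∈ range (n + 1) with P k, |bernsteinWeight n k x * (f (k / n) - c)| :=
        (sum_filter_of_ne hfar).symm
    _ ≤ ∑ k ∈ range (n + 1) with P k, D * bernsteinWeight n k x := by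
        refine sum_le_sum fun k hk => ?_
        have hkn : k ≤ n := Nat.lt_succ_iff.mp (mem_range.mp (mem_filter.mp hk).1)
        have hw := bernsteinWeight_nonneg n k hx0 hx1
        rw [abs_mul, abs_of_nonneg hw, mul_comm D]
        exact mul_le_mul_of_nonneg_left (hD _ (natCast_div_mem_Icc hkn)) hw
    _ = D * ∑ k ∈ range (n + 1) with P k, bernsteinWeight n k x := (mul_sum _ _ _).symm

lemma sum_filter_or_le {ι : Type*} {s : Finset ι} {g : ι → ℝ} {Q R : ι → Prop}
    [DecidablePred Q] [DecidablePred R] (hg : ∀ i ∈ s, 0 ≤ g i) :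
    ∑ i ∈ s with Q i ∨ R i, g i ≤ ∑ i ∈ s with Q i, g i + ∑ i ∈ s with R i, g i := by
  simp only [sum_filter, ← sum_add_distrib]
  refine sum_le_sum fun i hi => ?_
  have := hg i hi
  split_ifs <;> first | linarith | tauto

/-- Chernoff's bound for binomial tails, with an arbitrary tilt `t`. -/
lemma sum_bernsteinWeight_le_of_mul_nonneg {n : ℕ} {x : ℝ} (hx0 : 0 ≤ x) (hx1 : x ≤ 1)
    {s : Finset ℕ} (hs : s ⊆ range (n + 1)) {t y : ℝ} (hst : ∀ k ∈ s, 0 ≤ t * (k - y)) :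
    ∑ k ∈ s, bernsteinWeight n k x ≤ exp (-(t * y)) * (x * exp t + (1 - x)) ^ n := by
  have hw := fun k => bernsteinWeight_nonneg n k hx0 hx1
  calc ∑ k ∈ s, bernsteinWeight n k x
      ≤ ∑ k ∈ s, bernsteinWeight n k x * exp (t * (k - y)) :=
        sum_le_sum fun k hk => le_mul_of_one_le_right (hw k) (one_le_exp (hst k hk))
    _ ≤ ∑ k ∈ range (n + 1), bernsteinWeight n k x * exp (t * (k - y)) :=
        sum_le_sum_of_subset_of_nonneg hs fun k _ _ => mul_nonneg (hw k) (exp_pos _).le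
    _ = exp (-(t * y)) * (x * exp t + (1 - x)) ^ n := by
        rw [← sum_bernsteinWeight_mul_exp, mul_sum]
        refine sum_congr rfl fun k _ => ?_
        rw [mul_sub, sub_eq_add_neg, exp_add]
        ring

lemma exp_mul_pow_eq_exp_klDiv {p x : ℝ} (hp0 : 0 < p) (hp1 : p < 1) (hx0 : 0 < x)
    (hx1 : x < 1) (n : ℕ) :
    exp (-(log (p * (1 - x) / (x * (1 - p))) * (n * p))) *
        (x * exp (log (p * (1 - x) / (x * (1 - p)))) + (1 - x)) ^ n =
      exp (-n * klDiv p x) := by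
  have h1x : 0 < 1 - x := by linarith
  have h1p : 0 < 1 - p := by linarith
  have hbase : x * exp (log (p * (1 - x) / (x * (1 - p)))) + (1 - x) = (1 - x) / (1 - p) := by
    rw [exp_log (by positivity)]
    field_simp
    ring
  rw [hbase, ← exp_log (by positivity : 0 < (1 - x) / (1 - p)), ← exp_nat_mul, ← exp_add,
    klDiv, log_div hp0.ne' hx0.ne', log_div h1p.ne' h1x.ne', log_div h1x.ne' h1p.ne',
    log_div (by positivity) (by positivity), log_mul hp0.ne' h1x.ne', log_mul hx0.ne' h1p.ne']
  ring_nf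

lemma sum_bernsteinWeight_lower_tail_le {p x : ℝ} (hp0 : 0 < p) (hpx : p ≤ x) (hx1 : x < 1) (n : ℕ) :
    ∑ k ∈ range (n + 1) with (k : ℕ) ≤ n * p, bernsteinWeight n k x ≤
      exp (-n * klDiv p x) := by
  have hx0 : 0 < x := hp0.trans_le hpx
  have h1x : 0 < 1 - x := by linarith
  rw [← exp_mul_pow_eq_exp_klDiv hp0 (hpx.trans_lt hx1) hx0 hx1]
  have ht : log (p * (1 - x) / (x * (1 - p))) ≤ 0 :=
    log_nonpos (div_nonneg (by positivity) (by nlinarith))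
      (div_le_one_of_le₀ (by nlinarith) (by nlinarith))
  refine sum_bernsteinWeight_le_of_mul_nonneg hx0.le hx1.le (filter_subset _ _) fun k hk => ?_
  exact mul_nonneg_of_nonpos_of_nonpos ht (by linarith [(mem_filter.mp hk).2])

lemma sum_bernsteinWeight_upper_tail_le {p x : ℝ} (hx0 : 0 < x) (hxp : x ≤ p) (hp1 : p < 1) (n : ℕ) :
    ∑ k ∈ range (n + 1) with n * p ≤ (k : ℕ), bernsteinWeight n k x ≤
      exp (-n * klDiv p x) := by
  have hx1 : x < 1 := hxp.trans_lt hp1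
  rw [← exp_mul_pow_eq_exp_klDiv (hx0.trans_le hxp) hp1 hx0 hx1]
  have h1p : 0 < 1 - p := by linarith
  have ht : 0 ≤ log (p * (1 - x) / (x * (1 - p))) :=
    log_nonneg ((one_le_div (by positivity)).mpr (by nlinarith))
  refine sum_bernsteinWeight_le_of_mul_nonneg hx0.le hx1.le (filter_subset _ _) fun k hk => ?_
  exact mul_nonneg ht (by linarith [(mem_filter.mp hk).2])

lemma natCast_div_mem_Ioo_of_lt_of_lt {k n : ℕ} {a b : ℝ} (hak : n * a < k) (hkb : k < n * b) :
    (k : ℝ) / n ∈ Set.Ioo a b := by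
  have hn : (0 : ℝ) < n := by
    rcases n.eq_zero_or_pos with rfl | hn
    · simp only [Nat.cast_zero, zero_mul] at hak hkb
      linarith
    · exact_mod_cast hn
  exact ⟨(lt_div_iff₀ hn).mpr (by linarith), (div_lt_iff₀ hn).mpr (by linarith)⟩

theorem bernstein_locally_const_bound_general (f : ℝ → ℝ) (M a b c : ℝ)
    (hM : ∀ t ∈ Set.Icc (0 : ℝ) 1, |f t| ≤ M)
    (ha : 0 < a) (hb : b < 1)
    (hconst : ∀ t ∈ Set.Ioo a b, f t = c) :
    ∀ x ∈ Set.Ioo a b, ∀ n : ℕ,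
      |bernsteinOp n f x - f x| ≤
        2 * M * (Real.exp (-(n : ℝ) * klDiv a x) + Real.exp (-(n : ℝ) * klDiv b x)) := by
  intro x hx n
  have hx0 : 0 < x := ha.trans hx.1
  have hx1 : x < 1 := hx.2.trans hb
  have hfx : f x = c := hconst x hx
  have hcM : |c| ≤ M := hfx ▸ hM x ⟨hx0.le, hx1.le⟩
  have hD : ∀ t ∈ Set.Icc (0 : ℝ) 1, |f t - c| ≤ 2 * M := fun t ht => by
    linarith [abs_sub (f t) c, hM t ht]
  have hfar : ∀ k ≤ n, ¬ ((k : ℝ) ≤ n * a ∨ n * b ≤ k) → f (k / n) = c := fun k _ hk => by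
    push Not at hk
    exact hconst _ (natCast_div_mem_Ioo_of_lt_of_lt hk.1 hk.2)
  rw [hfx]
  refine (abs_bernsteinOp_sub_le hD hfar hx0.le hx1.le).trans ?_
  gcongr
  · linarith [abs_nonneg c]
  · exact (sum_filter_or_le fun k _ => bernsteinWeight_nonneg n k hx0.le hx1.le).trans
      (add_le_add (sum_bernsteinWeight_lower_tail_le ha hx.1.le hx1 n)
        (sum_bernsteinWeight_upper_tail_le hx0 hx.2.le hb n))

theorem bernstein_locally_const_bound (f : ℝ → ℝ) (M a b c : ℝ)
    (hM : ∀ t ∈ Set.Icc (0 : ℝ) 1, |f t| ≤ M)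
    (ha : 0 < a) (hab : a < b) (hb : b < 1)
    (hconst : ∀ t ∈ Set.Ioo a b, f t = c) :
    ∀ x ∈ Set.Ioo a b, ∀ n : ℕ,
      |bernsteinOp n f x - f x| ≤
        2 * M * (Real.exp (-(n : ℝ) * klDiv a x) + Real.exp (-(n : ℝ) * klDiv b x)) :=
  bernstein_locally_const_bound_general f M a b c hM ha hb hconst
end

section
/- Let f : [0,1] → ℝ with |f(t)| ≤ M, and suppose f is constant on [0,b) with 0 < b < 1. Then for every x ∈ [0,b) and n ∈ ℕ, |B_n(f,x) − f(x)| ≤ 2M·exp(−n·H(b‖x)). -/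
open Finset Real

theorem bernstein_left_const_bound (f : ℝ → ℝ) (M b c : ℝ)
    (hM : ∀ t ∈ Set.Icc (0 : ℝ) 1, |f t| ≤ M)
    (hb0 : 0 < b) (hb : b < 1)
    (hconst : ∀ t ∈ Set.Ico (0 : ℝ) b, f t = c) :
    ∀ x ∈ Set.Ico (0 : ℝ) b, ∀ n : ℕ,
      |bernsteinOp n f x - f x| ≤ 2 * M * Real.exp (-(n : ℝ) * klDiv b x) := by
  intro x hx n
  obtain ⟨hx0, hxb⟩ := hx
  have hb1 : (0:ℝ) < 1 - b := by linarith
  have hx1 : (0:ℝ) < 1 - x := by linarith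
  have hM0 : 0 ≤ M := le_trans (abs_nonneg _) (hM 0 ⟨le_rfl, by norm_num⟩)
  have hfx : f x = c := hconst x ⟨hx0, hxb⟩
  rcases eq_or_lt_of_le hx0 with h0 | hxpos
  · have hB : bernsteinOp n f x = f x := by
      rw [← h0]
      unfold bernsteinOp
      rw [Finset.sum_eq_single 0]
      · simp
      · intro k hk hk0
        simp [zero_pow hk0]
      · simp
    rw [hB, sub_self, abs_zero]
    positivity
  · -- main case : 0 < x < b
    set t : ℝ := b * (1 - x) / ((1 - b) * x) with ht_def
    have htpos : 0 < t := by positivity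
    have ht1 : 1 < t := by
      rw [ht_def, lt_div_iff₀ (by positivity)]
      nlinarith
    set p : ℕ → ℝ := fun k => (n.choose k : ℝ) * x ^ k * (1 - x) ^ (n - k) with hp_def
    have hpnn : ∀ k, 0 ≤ p k := by
      intro k
      have : (0:ℝ) ≤ (n.choose k : ℝ) := by positivity
      simp only [hp_def]
      positivity
    have hsum1 : ∑ k ∈ Finset.range (n+1), p k = 1 := by
      have h := add_pow x (1 - x) n
      have hone : x + (1 - x) = 1 := by ring
      rw [hone, one_pow] at h
      rw [h]
      exact Finset.sum_congr rfl fun k _ => by simp only [hp_def]; ring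
    have hdiff : bernsteinOp n f x - f x
        = ∑ k ∈ Finset.range (n+1), (f ((k:ℝ)/(n:ℝ)) - c) * p k := by
      have h1 : ∑ k ∈ Finset.range (n+1), (f ((k:ℝ)/(n:ℝ)) - c) * p k
          = (∑ k ∈ Finset.range (n+1), f ((k:ℝ)/(n:ℝ)) * p k)
            - ∑ k ∈ Finset.range (n+1), c * p k := by
        rw [← Finset.sum_sub_distrib]
        exact Finset.sum_congr rfl fun k _ => by ring
      rw [h1, ← Finset.mul_sum, hsum1, mul_one, hfx]
      congr 1
      unfold bernsteinOp
      exact Finset.sum_congr rfl fun k _ => by simp only [hp_def]; ring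
    -- per-term bound
    have hterm : ∀ k ∈ Finset.range (n+1),
        |(f ((k:ℝ)/(n:ℝ)) - c) * p k|
          ≤ if (n:ℝ)*b ≤ (k:ℝ) then 2*M*p k else 0 := by
      intro k hk
      have hkn : k ≤ n := Nat.lt_succ_iff.mp (Finset.mem_range.mp hk)
      by_cases hkb : (n:ℝ)*b ≤ (k:ℝ)
      · rw [if_pos hkb, abs_mul, abs_of_nonneg (hpnn k)]
        have hu : (k:ℝ)/(n:ℝ) ∈ Set.Icc (0:ℝ) 1 := by
          rcases Nat.eq_zero_or_pos n with hn | hn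
          · subst hn
            interval_cases k
            norm_num
          · constructor
            · positivity
            · rw [div_le_one (by exact_mod_cast hn)]
              exact_mod_cast hkn
        have hc : |c| ≤ M := hfx ▸ hM x ⟨hx0, by linarith⟩
        have hf : |f ((k:ℝ)/(n:ℝ))| ≤ M := hM _ hu
        have : |f ((k:ℝ)/(n:ℝ)) - c| ≤ 2*M := by
          calc |f ((k:ℝ)/(n:ℝ)) - c| ≤ |f ((k:ℝ)/(n:ℝ))| + |c| := abs_sub _ _
            _ ≤ 2*M := by linarith
        nlinarith [hpnn k, abs_nonneg (f ((k:ℝ)/(n:ℝ)) - c)]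
      · rw [if_neg hkb]
        push_neg at hkb
        have hn : 0 < n := by
          by_contra hn
          push_neg at hn
          interval_cases n
          simp at hkb
          nlinarith [Nat.cast_nonneg (α := ℝ) k]
        have : (k:ℝ)/(n:ℝ) < b := by
          rw [div_lt_iff₀ (by exact_mod_cast hn)]
          linarith [hkb]
        have hfc : f ((k:ℝ)/(n:ℝ)) = c := hconst _ ⟨by positivity, this⟩
        simp [hfc]
    -- Chernoff bound
    have hcher : ∑ k ∈ (Finset.range (n+1)).filter (fun k : ℕ => (n:ℝ)*b ≤ (k:ℝ)), p k
        ≤ Real.exp (-(n:ℝ) * klDiv b x) := by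
      have key : ∀ k ∈ (Finset.range (n+1)).filter (fun k : ℕ => (n:ℝ)*b ≤ (k:ℝ)),
          p k ≤ t ^ (-(n:ℝ)*b) * ((n.choose k : ℝ) * (x*t)^k * (1-x)^(n-k)) := by
        intro k hk
        obtain ⟨-, hkb⟩ := Finset.mem_filter.mp hk
        have h1 : (1:ℝ) ≤ t ^ ((k:ℝ) - (n:ℝ)*b) :=
          Real.one_le_rpow ht1.le (by linarith)
        have hsplit : t ^ ((k:ℝ) - (n:ℝ)*b) = t ^ k * t ^ (-(n:ℝ)*b) := by
          rw [sub_eq_add_neg, Real.rpow_add htpos, Real.rpow_natCast, neg_mul]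
        have heq : t ^ (-(n:ℝ)*b) * ((n.choose k : ℝ) * (x*t)^k * (1-x)^(n-k))
            = (t ^ k * t ^ (-(n:ℝ)*b)) * p k := by
          simp only [hp_def, mul_pow]
          ring
        rw [heq, ← hsplit]
        nlinarith [hpnn k, Real.rpow_pos_of_pos htpos ((k:ℝ) - (n:ℝ)*b)]
      calc ∑ k ∈ (Finset.range (n+1)).filter (fun k : ℕ => (n:ℝ)*b ≤ (k:ℝ)), p k
          ≤ ∑ k ∈ (Finset.range (n+1)).filter (fun k : ℕ => (n:ℝ)*b ≤ (k:ℝ)),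
              t ^ (-(n:ℝ)*b) * ((n.choose k : ℝ) * (x*t)^k * (1-x)^(n-k)) :=
            Finset.sum_le_sum key
        _ ≤ ∑ k ∈ Finset.range (n+1),
              t ^ (-(n:ℝ)*b) * ((n.choose k : ℝ) * (x*t)^k * (1-x)^(n-k)) := by
            apply Finset.sum_le_sum_of_subset_of_nonneg (Finset.filter_subset _ _)
            intro k _ _
            have h1 : (0:ℝ) ≤ (n.choose k : ℝ) := by positivity
            have h2 : (0:ℝ) < t ^ (-(n:ℝ)*b) := Real.rpow_pos_of_pos htpos _
            positivity
        _ = t ^ (-(n:ℝ)*b) * (x*t + (1-x))^n := by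
            rw [← Finset.mul_sum, add_pow]
            congr 1
            exact Finset.sum_congr rfl fun k _ => by ring
        _ = Real.exp (-(n:ℝ) * klDiv b x) := by
            have hxt : x * t + (1 - x) = (1 - x) / (1 - b) := by
              rw [ht_def]
              field_simp
              ring
            rw [hxt, Real.rpow_def_of_pos htpos,
              ← Real.exp_log (div_pos hx1 hb1), ← Real.exp_nat_mul, ← Real.exp_add]
            congr 1
            have hlogt : Real.log t
                = Real.log b + Real.log (1-x) - (Real.log (1-b) + Real.log x) := by
              rw [ht_def, Real.log_div (by positivity) (by positivity),
                Real.log_mul hb0.ne' hx1.ne', Real.log_mul hb1.ne' hxpos.ne']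
            unfold klDiv
            rw [Real.log_div hb0.ne' hxpos.ne', Real.log_div hb1.ne' hx1.ne', Real.log_div hx1.ne' hb1.ne', hlogt]
            ring
    -- assemble
    calc |bernsteinOp n f x - f x|
        = |∑ k ∈ Finset.range (n+1), (f ((k:ℝ)/(n:ℝ)) - c) * p k| := by rw [hdiff]
      _ ≤ ∑ k ∈ Finset.range (n+1), |(f ((k:ℝ)/(n:ℝ)) - c) * p k| :=
          Finset.abs_sum_le_sum_abs _ _
      _ ≤ ∑ k ∈ Finset.range (n+1), (if (n:ℝ)*b ≤ (k:ℝ) then 2*M*p k else 0) :=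
          Finset.sum_le_sum hterm
      _ = 2*M * ∑ k ∈ (Finset.range (n+1)).filter (fun k : ℕ => (n:ℝ)*b ≤ (k:ℝ)), p k := by
          simp only [Finset.mul_sum, Finset.sum_filter]
          exact Finset.sum_congr rfl fun k _ => by split <;> ring
      _ ≤ 2*M * Real.exp (-(n:ℝ) * klDiv b x) := by
          apply mul_le_mul_of_nonneg_left hcher (by linarith)
end

section
/- For every 0 < h < 1/2, every y₁, y₂ ∈ [−1,1], and every n ∈ ℕ, there exists a real polynomial P of degree at most n with |P(t)| ≤ max(|y₁|,|y₂|) for all t ∈ [0,1], such that |P(t) − y₁| ≤ 2(4h(1−h))^{n/2} for t ∈ [0,h] and |P(t) − y₂| ≤ 2(4h(1−h))^{n/2} for t ∈ [1−h,1]. -/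
open Real Polynomial

lemma keybound {h t : ℝ} (hh0 : 0 < h) (hh : h < 1/2) (ht0 : 0 ≤ t) (hth : t ≤ h)
    {n k : ℕ} (hk : n ≤ 2 * k) (hkn : k ≤ n) :
    t ^ k * (1 - t) ^ (n - k) ≤ (h * (1 - h)) ^ ((n : ℝ) / 2) := by
  rcases Nat.eq_zero_or_pos n with hn | hn
  · subst hn
    interval_cases k
    simp
  have ht2 : t ≤ 1/2 := hth.trans hh.le
  have h1t : 0 ≤ 1 - t := by linarith
  have hth' : t * (1 - t) ≤ h * (1 - h) := by nlinarith
  have htt : 0 ≤ t * (1 - t) := mul_nonneg ht0 h1t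
  have hsplit : t ^ k * (1 - t) ^ (n - k) = (t * (1 - t)) ^ (n - k) * t ^ (2 * k - n) := by
    have e : t ^ k = t ^ (n - k) * t ^ (2 * k - n) := by
      rw [← pow_add]; congr 1; omega
    rw [e, mul_pow]; ring
  rw [hsplit]
  have hts : t ^ (2 * k - n) ≤ (t * (1 - t)) ^ (((2 * k - n : ℕ) : ℝ) / 2) := by
    have ht2le : t ^ 2 ≤ t * (1 - t) := by nlinarith
    calc t ^ (2 * k - n) = (t ^ (2 : ℝ)) ^ (((2 * k - n : ℕ) : ℝ) / 2) := by
          rw [← Real.rpow_mul ht0,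
            show (2:ℝ) * (((2 * k - n : ℕ) : ℝ) / 2) = ((2 * k - n : ℕ) : ℝ) by ring,
            Real.rpow_natCast]
      _ = (t ^ 2) ^ (((2 * k - n : ℕ) : ℝ) / 2) := by rw [Real.rpow_two]
      _ ≤ (t * (1 - t)) ^ (((2 * k - n : ℕ) : ℝ) / 2) :=
          Real.rpow_le_rpow (sq_nonneg t) ht2le (by positivity)
  have h1 : ((n - k : ℕ) : ℝ) = n - k := by rw [Nat.cast_sub hkn]
  have h2 : ((2 * k - n : ℕ) : ℝ) = 2 * k - n := by
    rw [Nat.cast_sub (by omega)]; push_cast; ring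
  calc (t * (1 - t)) ^ (n - k) * t ^ (2 * k - n)
      ≤ (t * (1 - t)) ^ (n - k) * (t * (1 - t)) ^ (((2 * k - n : ℕ) : ℝ) / 2) :=
        mul_le_mul_of_nonneg_left hts (by positivity)
    _ = (t * (1 - t)) ^ ((n : ℝ) / 2) := by
        rw [← Real.rpow_natCast (t * (1 - t)) (n - k), ← Real.rpow_add' htt]
        · congr 1
          rw [h1, h2]; ring
        · rw [h1, h2]
          have : (0:ℝ) < n := by exact_mod_cast hn
          intro hc; nlinarith
    _ ≤ (h * (1 - h)) ^ ((n : ℝ) / 2) :=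
        Real.rpow_le_rpow htt hth' (by positivity)

lemma four_rpow (h : ℝ) (hh0 : 0 < h) (hh : h < 1/2) (n : ℕ) :
    (4 * h * (1 - h)) ^ ((n : ℝ) / 2) = 2 ^ n * (h * (1 - h)) ^ ((n : ℝ) / 2) := by
  have hhh : (0:ℝ) ≤ h * (1 - h) := by nlinarith
  rw [show (4:ℝ) * h * (1 - h) = 4 * (h * (1 - h)) by ring,
    Real.mul_rpow (by norm_num) hhh]
  congr 1
  rw [show (4:ℝ) = 2 ^ (2:ℝ) by norm_num [Real.rpow_two], ← Real.rpow_mul (by norm_num),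
    show (2:ℝ) * ((n:ℝ)/2) = (n:ℝ) by ring, Real.rpow_natCast]

theorem two_segment_bernstein_bound (h : ℝ) (hh0 : 0 < h) (hh : h < 1 / 2)
    (y₁ y₂ : ℝ) (hy₁ : y₁ ∈ Set.Icc (-1 : ℝ) 1) (hy₂ : y₂ ∈ Set.Icc (-1 : ℝ) 1)
    (n : ℕ) :
    ∃ P : Polynomial ℝ, P.natDegree ≤ n ∧
      (∀ t ∈ Set.Icc (0 : ℝ) 1, |P.eval t| ≤ max |y₁| |y₂|) ∧
      (∀ t ∈ Set.Icc (0 : ℝ) h, |P.eval t - y₁| ≤ 2 * (4 * h * (1 - h)) ^ ((n : ℝ) / 2)) ∧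
      (∀ t ∈ Set.Icc (1 - h) 1, |P.eval t - y₂| ≤ 2 * (4 * h * (1 - h)) ^ ((n : ℝ) / 2)) := by
  obtain ⟨hy₁l, hy₁r⟩ := hy₁
  obtain ⟨hy₂l, hy₂r⟩ := hy₂
  set c : ℕ → ℝ := fun k => if 2 * k < n then y₁ else y₂ with hc
  refine ⟨∑ k ∈ Finset.range (n + 1), Polynomial.C (c k) * bernsteinPolynomial ℝ n k,
    ?_, ?_, ?_, ?_⟩
  · apply Polynomial.natDegree_sum_le_of_forall_le
    intro k hk
    simp only [Finset.mem_range, Nat.lt_succ_iff] at hk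
    calc (Polynomial.C (c k) * bernsteinPolynomial ℝ n k).natDegree
        ≤ (Polynomial.C (c k)).natDegree + (bernsteinPolynomial ℝ n k).natDegree :=
          Polynomial.natDegree_mul_le
      _ ≤ 0 + n := by
          apply add_le_add (le_of_eq (Polynomial.natDegree_C _))
          unfold bernsteinPolynomial
          calc ((n.choose k : ℝ[X]) * X ^ k * (1 - X) ^ (n - k)).natDegree
              ≤ ((n.choose k : ℝ[X]) * X ^ k).natDegree + ((1 - X : ℝ[X]) ^ (n - k)).natDegree :=
                Polynomial.natDegree_mul_le
            _ ≤ (((n.choose k : ℝ[X])).natDegree + (X ^ k : ℝ[X]).natDegree)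
                  + (n - k) * (1 - X : ℝ[X]).natDegree :=
                add_le_add Polynomial.natDegree_mul_le (Polynomial.natDegree_pow_le)
            _ ≤ (0 + k) + (n - k) * 1 := by
                apply add_le_add (add_le_add (le_of_eq (Polynomial.natDegree_natCast _))
                  (le_of_eq (Polynomial.natDegree_X_pow _)))
                apply Nat.mul_le_mul_left
                calc (1 - X : ℝ[X]).natDegree ≤ max (1:ℝ[X]).natDegree (X:ℝ[X]).natDegree :=
                      Polynomial.natDegree_sub_le _ _
                  _ ≤ 1 := by simp
            _ ≤ n := by omega
      _ = n := by ring
  · -- bound by max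
    intro t ht
    obtain ⟨ht0, ht1⟩ := ht
    have h1t : 0 ≤ 1 - t := by linarith
    rw [Polynomial.eval_finset_sum]
    have hsum1 : ∑ k ∈ Finset.range (n+1), (bernsteinPolynomial ℝ n k).eval t = 1 := by
      have := congrArg (Polynomial.eval t) (bernsteinPolynomial.sum ℝ n)
      simpa [Polynomial.eval_finset_sum] using this
    calc |∑ k ∈ Finset.range (n+1), (Polynomial.C (c k) * bernsteinPolynomial ℝ n k).eval t|
        ≤ ∑ k ∈ Finset.range (n+1), |(Polynomial.C (c k) * bernsteinPolynomial ℝ n k).eval t| :=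
          Finset.abs_sum_le_sum_abs _ _
      _ ≤ ∑ k ∈ Finset.range (n+1), max |y₁| |y₂| * (bernsteinPolynomial ℝ n k).eval t := by
          apply Finset.sum_le_sum
          intro k hk
          have he : (0:ℝ) ≤ (bernsteinPolynomial ℝ n k).eval t := by
            simp only [bernsteinPolynomial, Polynomial.eval_mul, Polynomial.eval_pow,
              Polynomial.eval_sub, Polynomial.eval_one, Polynomial.eval_X,
              Polynomial.eval_natCast]
            positivity
          rw [Polynomial.eval_mul, Polynomial.eval_C, abs_mul, abs_of_nonneg he]
          apply mul_le_mul_of_nonneg_right _ he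
          rw [hc]
          dsimp only
          split
          · exact le_max_left _ _
          · exact le_max_right _ _
      _ = max |y₁| |y₂| := by rw [← Finset.mul_sum, hsum1, mul_one]
  · -- near 0
    intro t ht
    obtain ⟨ht0, ht1⟩ := ht
    have h1t : 0 ≤ 1 - t := by linarith
    have hP : (0:ℝ) ≤ h * (1 - h) := by nlinarith
    have hR : (0:ℝ) ≤ (h * (1 - h)) ^ ((n : ℝ)/2) := Real.rpow_nonneg hP _
    have hsum1 : ∑ k ∈ Finset.range (n+1), (bernsteinPolynomial ℝ n k).eval t = 1 := by
      have := congrArg (Polynomial.eval t) (bernsteinPolynomial.sum ℝ n)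
      simpa [Polynomial.eval_finset_sum] using this
    have key : (∑ k ∈ Finset.range (n+1),
        Polynomial.C (c k) * bernsteinPolynomial ℝ n k).eval t - y₁ =
        ∑ k ∈ Finset.range (n+1), (c k - y₁) * (bernsteinPolynomial ℝ n k).eval t := by
      rw [Polynomial.eval_finset_sum]
      have expand : ∑ k ∈ Finset.range (n+1), (c k - y₁) * (bernsteinPolynomial ℝ n k).eval t
          = (∑ k ∈ Finset.range (n+1), c k * (bernsteinPolynomial ℝ n k).eval t)
            - ∑ k ∈ Finset.range (n+1), y₁ * (bernsteinPolynomial ℝ n k).eval t := by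
        rw [← Finset.sum_sub_distrib]
        apply Finset.sum_congr rfl
        intros; ring
      rw [expand, ← Finset.mul_sum, hsum1, mul_one]
      congr 1
      apply Finset.sum_congr rfl
      intro k _
      rw [Polynomial.eval_mul, Polynomial.eval_C]
    rw [key]
    calc |∑ k ∈ Finset.range (n+1), (c k - y₁) * (bernsteinPolynomial ℝ n k).eval t|
        ≤ ∑ k ∈ Finset.range (n+1), |(c k - y₁) * (bernsteinPolynomial ℝ n k).eval t| :=
          Finset.abs_sum_le_sum_abs _ _
      _ ≤ ∑ k ∈ Finset.range (n+1),
            2 * ((n.choose k : ℝ) * (h * (1 - h)) ^ ((n : ℝ)/2)) := by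
          apply Finset.sum_le_sum
          intro k hk
          simp only [Finset.mem_range, Nat.lt_succ_iff] at hk
          rw [hc]
          dsimp only
          by_cases hcase : 2 * k < n
          · rw [if_pos hcase]
            simp only [sub_self, zero_mul, abs_zero]
            exact mul_nonneg (by norm_num) (mul_nonneg (Nat.cast_nonneg _) hR)
          · rw [if_neg hcase]
            have habs : |y₂ - y₁| ≤ 2 := by
              rw [abs_le]; constructor <;> linarith
            have he : (bernsteinPolynomial ℝ n k).eval t =
                (n.choose k : ℝ) * (t ^ k * (1 - t) ^ (n - k)) := by
              simp [bernsteinPolynomial]; ring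
            have hnn : (0:ℝ) ≤ (n.choose k : ℝ) * (t ^ k * (1 - t) ^ (n - k)) :=
              mul_nonneg (Nat.cast_nonneg _)
                (mul_nonneg (pow_nonneg ht0 _) (pow_nonneg h1t _))
            rw [abs_mul, he, abs_of_nonneg hnn]
            have hkey := keybound hh0 (by linarith) ht0 ht1 (by omega) hk
            exact mul_le_mul habs
              (mul_le_mul_of_nonneg_left hkey (Nat.cast_nonneg _)) hnn (by norm_num)
      _ = 2 * (4 * h * (1 - h)) ^ ((n : ℝ)/2) := by
          rw [four_rpow h hh0 (by linarith)]
          have hch : ∑ k ∈ Finset.range (n+1), (n.choose k : ℝ) = 2 ^ n := by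
            rw [← Nat.cast_sum, Nat.sum_range_choose]; push_cast; ring
          have : ∑ k ∈ Finset.range (n+1),
              2 * ((n.choose k : ℝ) * (h * (1 - h)) ^ ((n : ℝ)/2))
              = 2 * (h * (1 - h)) ^ ((n : ℝ)/2) * ∑ k ∈ Finset.range (n+1), (n.choose k : ℝ) := by
            rw [Finset.mul_sum]
            apply Finset.sum_congr rfl
            intros; ring
          rw [this, hch]; ring
  · -- near 1
    intro t ht
    obtain ⟨ht0, ht1⟩ := ht
    have h1t : 0 ≤ 1 - t := by linarith
    have ht0' : 0 ≤ t := by nlinarith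
    have hP : (0:ℝ) ≤ h * (1 - h) := by nlinarith
    have hR : (0:ℝ) ≤ (h * (1 - h)) ^ ((n : ℝ)/2) := Real.rpow_nonneg hP _
    have hsum1 : ∑ k ∈ Finset.range (n+1), (bernsteinPolynomial ℝ n k).eval t = 1 := by
      have := congrArg (Polynomial.eval t) (bernsteinPolynomial.sum ℝ n)
      simpa [Polynomial.eval_finset_sum] using this
    have key : (∑ k ∈ Finset.range (n+1),
        Polynomial.C (c k) * bernsteinPolynomial ℝ n k).eval t - y₂ =
        ∑ k ∈ Finset.range (n+1), (c k - y₂) * (bernsteinPolynomial ℝ n k).eval t := by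
      rw [Polynomial.eval_finset_sum]
      have expand : ∑ k ∈ Finset.range (n+1), (c k - y₂) * (bernsteinPolynomial ℝ n k).eval t
          = (∑ k ∈ Finset.range (n+1), c k * (bernsteinPolynomial ℝ n k).eval t)
            - ∑ k ∈ Finset.range (n+1), y₂ * (bernsteinPolynomial ℝ n k).eval t := by
        rw [← Finset.sum_sub_distrib]
        apply Finset.sum_congr rfl
        intros; ring
      rw [expand, ← Finset.mul_sum, hsum1, mul_one]
      congr 1
      apply Finset.sum_congr rfl
      intro k _
      rw [Polynomial.eval_mul, Polynomial.eval_C]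
    rw [key]
    calc |∑ k ∈ Finset.range (n+1), (c k - y₂) * (bernsteinPolynomial ℝ n k).eval t|
        ≤ ∑ k ∈ Finset.range (n+1), |(c k - y₂) * (bernsteinPolynomial ℝ n k).eval t| :=
          Finset.abs_sum_le_sum_abs _ _
      _ ≤ ∑ k ∈ Finset.range (n+1),
            2 * ((n.choose k : ℝ) * (h * (1 - h)) ^ ((n : ℝ)/2)) := by
          apply Finset.sum_le_sum
          intro k hk
          simp only [Finset.mem_range, Nat.lt_succ_iff] at hk
          rw [hc]
          dsimp only
          by_cases hcase : 2 * k < n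
          · rw [if_pos hcase]
            have habs : |y₁ - y₂| ≤ 2 := by
              rw [abs_le]; constructor <;> linarith
            have he : (bernsteinPolynomial ℝ n k).eval t =
                (n.choose k : ℝ) * (t ^ k * (1 - t) ^ (n - k)) := by
              simp [bernsteinPolynomial]; ring
            have hnn : (0:ℝ) ≤ (n.choose k : ℝ) * (t ^ k * (1 - t) ^ (n - k)) :=
              mul_nonneg (Nat.cast_nonneg _)
                (mul_nonneg (pow_nonneg ht0' _) (pow_nonneg h1t _))
            rw [abs_mul, he, abs_of_nonneg hnn]
            have hkey := keybound hh0 (by linarith) h1t (by linarith)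
              (n := n) (k := n - k) (by omega) (by omega)
            have hrw : (1 - t) ^ (n - k) * (1 - (1 - t)) ^ (n - (n - k)) =
                t ^ k * (1 - t) ^ (n - k) := by
              have e1 : n - (n - k) = k := by omega
              have e2 : (1:ℝ) - (1 - t) = t := by ring
              rw [e1, e2]; ring
            rw [hrw] at hkey
            exact mul_le_mul habs
              (mul_le_mul_of_nonneg_left hkey (Nat.cast_nonneg _)) hnn (by norm_num)
          · rw [if_neg hcase]
            simp only [sub_self, zero_mul, abs_zero]
            exact mul_nonneg (by norm_num) (mul_nonneg (Nat.cast_nonneg _) hR)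
      _ = 2 * (4 * h * (1 - h)) ^ ((n : ℝ)/2) := by
          rw [four_rpow h hh0 (by linarith)]
          have hch : ∑ k ∈ Finset.range (n+1), (n.choose k : ℝ) = 2 ^ n := by
            rw [← Nat.cast_sum, Nat.sum_range_choose]; push_cast; ring
          have : ∑ k ∈ Finset.range (n+1),
              2 * ((n.choose k : ℝ) * (h * (1 - h)) ^ ((n : ℝ)/2))
              = 2 * (h * (1 - h)) ^ ((n : ℝ)/2) * ∑ k ∈ Finset.range (n+1), (n.choose k : ℝ) := by
            rw [Finset.mul_sum]
            apply Finset.sum_congr rfl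
            intros; ring
          rw [this, hch]; ring
end

section
/- Let I₁, I₂ be disjoint closed intervals of equal length 2δ, with distance σ between them and diameter D = σ + 4δ of their union. Then for all y₁,y₂ ∈ [−1,1] and n ∈ ℕ there is a polynomial P of degree ≤ n with |P| ≤ max(|y₁|,|y₂|) on the convex hull of I₁ ∪ I₂ and |P(t) − y_i| ≤ 2(1 − σ²/D²)^{n/2} for t ∈ I_i, i = 1,2. -/
/-!
The majority polynomial `H(x) = ℙ(Bin(n, x) > n / 2)` maps `[0, 1]` into `[0, 1]`, and comparing
each Bernstein term with `√(x (1 - x)) ^ n` gives `H(x) ≤ (4 x (1 - x)) ^ (n / 2)` for `x ≤ 1 / 2`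
and `1 - H(x) ≤ (4 x (1 - x)) ^ (n / 2)` for `x ≥ 1 / 2`. Take
`P(t) = y₁ + (y₂ - y₁) H((t - a) / D)`. On `I₁ ∪ I₂` the variable `x = (t - a) / D` stays at least
`σ / (2D)` away from `1 / 2`, so `4 x (1 - x) ≤ 1 - σ² / D²`.
-/

open Real Polynomial Finset

/-- The probability that more than half of `n` independent Bernoulli(`x`) trials succeed. -/
noncomputable def bernsteinMajority (n : ℕ) : ℝ[X] :=
  ∑ ν ∈ (range (n + 1)).filter (fun ν => n < 2 * ν), bernsteinPolynomial ℝ n ν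

lemma natDegree_bernsteinPolynomial_le (R : Type*) [CommRing R] (n ν : ℕ) :
    (bernsteinPolynomial R n ν).natDegree ≤ n := by
  rcases le_or_gt ν n with h | h
  · unfold bernsteinPolynomial
    compute_degree
    omega
  · rw [bernsteinPolynomial.eq_zero_of_lt R h, natDegree_zero]
    exact Nat.zero_le _

lemma natDegree_bernsteinMajority_le (n : ℕ) : (bernsteinMajority n).natDegree ≤ n :=
  natDegree_sum_le_of_forall_le _ _ fun ν _ => natDegree_bernsteinPolynomial_le ℝ n ν

lemma eval_bernsteinPolynomial_nonneg {x : ℝ} (hx : x ∈ Set.Icc (0 : ℝ) 1) (n ν : ℕ) :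
    0 ≤ (bernsteinPolynomial ℝ n ν).eval x := by
  have := hx.1
  have := sub_nonneg.2 hx.2
  simp only [bernsteinPolynomial, eval_mul, eval_pow, eval_sub, eval_one, eval_X, eval_natCast]
  positivity

lemma one_sub_eval_bernsteinMajority (n : ℕ) (x : ℝ) :
    1 - (bernsteinMajority n).eval x =
      ∑ ν ∈ (range (n + 1)).filter (fun ν => ¬ n < 2 * ν), (bernsteinPolynomial ℝ n ν).eval x := by
  have h := congrArg (eval x) (bernsteinPolynomial.sum ℝ n)
  rw [← sum_filter_add_sum_filter_not _ (fun ν => n < 2 * ν), eval_add, eval_one] at h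
  rw [bernsteinMajority, ← eval_finsetSum, ← h, add_sub_cancel_left]

lemma eval_bernsteinMajority_mem_Icc (n : ℕ) {x : ℝ} (hx : x ∈ Set.Icc (0 : ℝ) 1) :
    (bernsteinMajority n).eval x ∈ Set.Icc (0 : ℝ) 1 := by
  have h₁ : 0 ≤ 1 - (bernsteinMajority n).eval x := by
    rw [one_sub_eval_bernsteinMajority]
    exact sum_nonneg fun ν _ => eval_bernsteinPolynomial_nonneg hx n ν
  refine ⟨?_, by linarith⟩
  rw [bernsteinMajority, eval_finsetSum]
  exact sum_nonneg fun ν _ => eval_bernsteinPolynomial_nonneg hx n ν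

lemma pow_mul_pow_le_sqrt_pow {p q : ℝ} (hp : 0 ≤ p) (hpq : p ≤ q) {m k : ℕ} (hkm : k ≤ m) :
    p ^ m * q ^ k ≤ √(p * q) ^ (m + k) := by
  obtain ⟨d, rfl⟩ := Nat.exists_eq_add_of_le hkm
  have hq : 0 ≤ q := hp.trans hpq
  refine (pow_le_pow_iff_left₀ (by positivity) (by positivity) two_ne_zero).1 ?_
  calc (p ^ (k + d) * q ^ k) ^ 2 = (p * q) ^ (2 * k) * p ^ d * p ^ d := by ring
    _ ≤ (p * q) ^ (2 * k) * p ^ d * q ^ d := by gcongr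
    _ = (√(p * q) ^ 2) ^ (k + d + k) := by rw [sq_sqrt (by positivity)]; ring
    _ = (√(p * q) ^ (k + d + k)) ^ 2 := by ring

lemma eval_bernsteinPolynomial_le {x : ℝ} (hx : x ∈ Set.Icc (0 : ℝ) 1) {n ν : ℕ} (hν : ν ≤ n)
    (h : (2 * x ≤ 1 ∧ n ≤ 2 * ν) ∨ (1 ≤ 2 * x ∧ 2 * ν ≤ n)) :
    (bernsteinPolynomial ℝ n ν).eval x ≤ n.choose ν * √(x * (1 - x)) ^ n := by
  obtain ⟨d, rfl⟩ := Nat.exists_eq_add_of_le hν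
  simp only [bernsteinPolynomial, eval_mul, eval_pow, eval_sub, eval_one, eval_X, eval_natCast,
    mul_assoc, Nat.add_sub_cancel_left]
  gcongr
  rcases h with ⟨hx', hν'⟩ | ⟨hx', hν'⟩
  · exact pow_mul_pow_le_sqrt_pow hx.1 (by linarith) (by omega)
  · rw [mul_comm x, mul_comm (x ^ ν), add_comm ν]
    exact pow_mul_pow_le_sqrt_pow (sub_nonneg.2 hx.2) (by linarith) (by omega)

lemma sum_eval_bernsteinPolynomial_le {x : ℝ} (hx : x ∈ Set.Icc (0 : ℝ) 1) {n : ℕ}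
    {s : Finset ℕ} (hs : s ⊆ range (n + 1))
    (h : ∀ ν ∈ s, (bernsteinPolynomial ℝ n ν).eval x ≤ n.choose ν * √(x * (1 - x)) ^ n) :
    ∑ ν ∈ s, (bernsteinPolynomial ℝ n ν).eval x ≤ (4 * (x * (1 - x))) ^ ((n : ℝ) / 2) := by
  calc ∑ ν ∈ s, (bernsteinPolynomial ℝ n ν).eval x
      ≤ ∑ ν ∈ range (n + 1), (n.choose ν : ℝ) * √(x * (1 - x)) ^ n :=
        (sum_le_sum h).trans (sum_le_sum_of_subset_of_nonneg hs fun _ _ _ => by positivity)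
    _ = (4 * (x * (1 - x))) ^ ((n : ℝ) / 2) := by
        have h4 : √4 = 2 := by rw [show (4 : ℝ) = 2 ^ 2 by norm_num, sqrt_sq zero_le_two]
        have := mul_nonneg hx.1 (sub_nonneg.2 hx.2)
        rw [← sum_mul, ← Nat.cast_sum, Nat.sum_range_choose, rpow_div_two_eq_sqrt _ (by positivity),
          rpow_natCast, sqrt_mul zero_le_four, h4, mul_pow, Nat.cast_pow, Nat.cast_ofNat]

lemma eval_bernsteinMajority_le (n : ℕ) {x : ℝ} (hx₀ : 0 ≤ x) (hx : 2 * x ≤ 1) :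
    (bernsteinMajority n).eval x ≤ (4 * (x * (1 - x))) ^ ((n : ℝ) / 2) := by
  have hx' : x ∈ Set.Icc (0 : ℝ) 1 := ⟨hx₀, by linarith⟩
  rw [bernsteinMajority, eval_finsetSum]
  refine sum_eval_bernsteinPolynomial_le hx' (filter_subset _ _) fun ν hν => ?_
  rw [mem_filter, mem_range] at hν
  exact eval_bernsteinPolynomial_le hx' (by omega) (Or.inl ⟨hx, by omega⟩)

lemma one_sub_eval_bernsteinMajority_le (n : ℕ) {x : ℝ} (hx : 1 ≤ 2 * x) (hx₁ : x ≤ 1) :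
    1 - (bernsteinMajority n).eval x ≤ (4 * (x * (1 - x))) ^ ((n : ℝ) / 2) := by
  have hx' : x ∈ Set.Icc (0 : ℝ) 1 := ⟨by linarith, hx₁⟩
  rw [one_sub_eval_bernsteinMajority]
  refine sum_eval_bernsteinPolynomial_le hx' (filter_subset _ _) fun ν hν => ?_
  rw [mem_filter, mem_range] at hν
  exact eval_bernsteinPolynomial_le hx' (by omega) (Or.inr ⟨hx, by omega⟩)

lemma abs_add_sub_mul_le_max {h : ℝ} (hh : h ∈ Set.Icc (0 : ℝ) 1) (y₁ y₂ : ℝ) :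
    |y₁ + (y₂ - y₁) * h| ≤ max |y₁| |y₂| := by
  obtain ⟨h₀, h₁⟩ := hh
  rcases le_total y₁ y₂ with hy | hy
  · exact abs_le_max_abs_abs (by nlinarith) (by nlinarith)
  · rw [max_comm]
    exact abs_le_max_abs_abs (by nlinarith) (by nlinarith)

theorem exists_polynomial_approx_step (n : ℕ) (y₁ y₂ : ℝ) :
    ∃ Q : ℝ[X], Q.natDegree ≤ n ∧
      (∀ x ∈ Set.Icc (0 : ℝ) 1, |Q.eval x| ≤ max |y₁| |y₂|) ∧
      (∀ x, 0 ≤ x → 2 * x ≤ 1 →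
        |Q.eval x - y₁| ≤ |y₂ - y₁| * (4 * (x * (1 - x))) ^ ((n : ℝ) / 2)) ∧
      (∀ x, 1 ≤ 2 * x → x ≤ 1 →
        |Q.eval x - y₂| ≤ |y₂ - y₁| * (4 * (x * (1 - x))) ^ ((n : ℝ) / 2)) := by
  refine ⟨C y₁ + C (y₂ - y₁) * bernsteinMajority n, ?_, ?_, ?_, ?_⟩
  · exact natDegree_add_le_of_degree_le ((natDegree_C y₁).trans_le (Nat.zero_le n))
      (natDegree_C_mul_le _ _ |>.trans (natDegree_bernsteinMajority_le n))
  · intro x hx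
    simpa only [eval_add, eval_C, eval_mul] using
      abs_add_sub_mul_le_max (eval_bernsteinMajority_mem_Icc n hx) y₁ y₂
  · intro x hx₀ hx
    have hH := (eval_bernsteinMajority_mem_Icc n ⟨hx₀, by linarith⟩).1
    rw [eval_add, eval_C, eval_mul, eval_C, add_sub_cancel_left, abs_mul, abs_of_nonneg hH]
    gcongr
    exact eval_bernsteinMajority_le n hx₀ hx
  · intro x hx hx₁
    have hH := (eval_bernsteinMajority_mem_Icc n ⟨by linarith, hx₁⟩).2
    rw [eval_add, eval_C, eval_mul, eval_C,
      show y₁ + (y₂ - y₁) * _ - y₂ = -((y₂ - y₁) * (1 - (bernsteinMajority n).eval x)) by ring,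
      abs_neg, abs_mul, abs_of_nonneg (sub_nonneg.2 hH)]
    gcongr
    exact one_sub_eval_bernsteinMajority_le n hx hx₁

lemma mul_one_sub_le_of_le_or_le {c x : ℝ} (hc : 2 * c ≤ 1) (hx : x ≤ c ∨ 1 - c ≤ x) :
    x * (1 - x) ≤ c * (1 - c) := by
  rcases hx with hx | hx <;> nlinarith

lemma four_mul_div_mul_one_sub_div_le {δ σ D u : ℝ} (hσ : 0 ≤ σ) (hD : D = σ + 4 * δ)
    (hD₀ : 0 < D) (hu : u ≤ 2 * δ ∨ 2 * δ + σ ≤ u) :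
    4 * (u / D * (1 - u / D)) ≤ 1 - σ ^ 2 / D ^ 2 := by
  have hρ : 1 - σ ^ 2 / D ^ 2 = 4 * (2 * δ / D * (1 - 2 * δ / D)) := by
    subst hD
    field_simp
    ring
  rw [hρ]
  refine mul_le_mul_of_nonneg_left (mul_one_sub_le_of_le_or_le ?_ ?_) zero_le_four
  · rw [mul_div_assoc', div_le_one hD₀]
    linarith
  · rcases hu with hu | hu
    · exact Or.inl (by gcongr)
    · refine Or.inr ?_
      rw [one_sub_div hD₀.ne']
      gcongr
      linarith

theorem exists_polynomial_approx_step_Icc (n : ℕ) (y₁ y₂ a : ℝ) {D : ℝ} (hD : 0 < D) :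
    ∃ P : ℝ[X], P.natDegree ≤ n ∧
      (∀ t ∈ Set.Icc a (a + D), |P.eval t| ≤ max |y₁| |y₂|) ∧
      (∀ t, a ≤ t → 2 * (t - a) ≤ D →
        |P.eval t - y₁| ≤ |y₂ - y₁| * (4 * ((t - a) / D * (1 - (t - a) / D))) ^ ((n : ℝ) / 2)) ∧
      (∀ t, D ≤ 2 * (t - a) → t ≤ a + D →
        |P.eval t - y₂| ≤ |y₂ - y₁| * (4 * ((t - a) / D * (1 - (t - a) / D))) ^ ((n : ℝ) / 2)) := by
  obtain ⟨Q, hdeg, hmax, h₁, h₂⟩ := exists_polynomial_approx_step n y₁ y₂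
  have hQ (t : ℝ) : (Q.comp ((X - C a) * C D⁻¹)).eval t = Q.eval ((t - a) / D) := by
    simp [div_eq_mul_inv]
  have hx₁ {t : ℝ} (ht : t ≤ a + D) : (t - a) / D ≤ 1 := (div_le_one hD).2 (by linarith)
  refine ⟨Q.comp ((X - C a) * C D⁻¹), ?_, fun t ht => ?_, fun t ht ht' => ?_, fun t ht ht' => ?_⟩
  · have hL : ((X - C a) * C D⁻¹).natDegree ≤ 1 := by compute_degree
    exact natDegree_comp_le.trans ((Nat.mul_le_mul hdeg hL).trans_eq (mul_one n))
  · rw [hQ]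
    exact hmax _ ⟨div_nonneg (sub_nonneg.2 ht.1) hD.le, hx₁ ht.2⟩
  · rw [hQ]
    refine h₁ _ (div_nonneg (sub_nonneg.2 ht) hD.le) ?_
    rwa [mul_div_assoc', div_le_one hD]
  · rw [hQ]
    refine h₂ _ ?_ (hx₁ ht')
    rwa [mul_div_assoc', one_le_div hD]

theorem two_equal_segments_bound (a b δ σ D : ℝ)
    (hδ : 0 < δ) (hσ : 0 < σ)
    (hb : b = a + 2 * δ + σ)   -- so Icc a (a+2δ) and Icc b (b+2δ) are at distance σ
    (hD : D = σ + 4 * δ)       -- the diameter of the union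
    (y₁ y₂ : ℝ) (hy₁ : y₁ ∈ Set.Icc (-1 : ℝ) 1) (hy₂ : y₂ ∈ Set.Icc (-1 : ℝ) 1)
    (n : ℕ) :
    ∃ P : Polynomial ℝ, P.natDegree ≤ n ∧
      (∀ t ∈ Set.Icc a (b + 2 * δ), |P.eval t| ≤ max |y₁| |y₂|) ∧
      (∀ t ∈ Set.Icc a (a + 2 * δ),
        |P.eval t - y₁| ≤ 2 * (1 - σ ^ 2 / D ^ 2) ^ ((n : ℝ) / 2)) ∧
      (∀ t ∈ Set.Icc b (b + 2 * δ),
        |P.eval t - y₂| ≤ 2 * (1 - σ ^ 2 / D ^ 2) ^ ((n : ℝ) / 2)) := by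
  have hD₀ : 0 < D := by linarith
  obtain ⟨P, hdeg, hmax, h₁, h₂⟩ := exists_polynomial_approx_step_Icc n y₁ y₂ a hD₀
  have hgap : |y₂ - y₁| ≤ 2 :=
    abs_sub_le_iff.2 ⟨by linarith [hy₂.2, hy₁.1], by linarith [hy₂.1, hy₁.2]⟩
  have hρ (t : ℝ) (ht : t ∈ Set.Icc a (b + 2 * δ)) (ht' : t ≤ a + 2 * δ ∨ b ≤ t) :
      |y₂ - y₁| * (4 * ((t - a) / D * (1 - (t - a) / D))) ^ ((n : ℝ) / 2) ≤
        2 * (1 - σ ^ 2 / D ^ 2) ^ ((n : ℝ) / 2) := by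
    have hx₀ : 0 ≤ (t - a) / D := div_nonneg (by linarith [ht.1]) hD₀.le
    have hx₁ : 0 ≤ 1 - (t - a) / D := sub_nonneg.2 ((div_le_one hD₀).2 (by linarith [ht.2]))
    gcongr
    exact four_mul_div_mul_one_sub_div_le hσ.le hD hD₀
      (ht'.imp (fun h => by linarith) (fun h => by linarith))
  refine ⟨P, hdeg, fun t ht => hmax t ⟨ht.1, by linarith [ht.2]⟩, fun t ht => ?_, fun t ht => ?_⟩
  · exact (h₁ t ht.1 (by linarith [ht.2])).trans (hρ t ⟨ht.1, by linarith [ht.2]⟩ (Or.inl ht.2))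
  · exact (h₂ t (by linarith [ht.1]) (by linarith [ht.2])).trans
      (hρ t ⟨by linarith [ht.1], ht.2⟩ (Or.inr ht.1))
end

section
/- Let I₁,…,I_s be disjoint closed intervals. Then E_{mn}(I₁,…,I_s) ≤ ε_m({−1,1}; E_n(I₁,…,I_s)), where E_n(I₁,…,I_s) = max_{y ∈ [−1,1]^s} min_{P ∈ 𝒫_n} max_i sup_{t ∈ I_i} |P(t) − y_i|, and ε_m(Y;δ) is the smallest ε such that there exists P ∈ 𝒫_m with |P(t) − y| ≤ ε whenever |t − y| ≤ δ, y ∈ Y. -/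
open Polynomial Set

/-- Best error of simultaneous approximation of the values `y i` on the sets `I i`
by a polynomial of degree `≤ n`. -/
noncomputable def bestErr {s : ℕ} (n : ℕ) (I : Fin s → Set ℝ) (y : Fin s → ℝ) : ℝ :=
  sInf {e : ℝ | ∃ P : Polynomial ℝ, P.natDegree ≤ n ∧ ∀ i, ∀ t ∈ I i, |P.eval t - y i| ≤ e}

/-- `E_n(I₁,…,I_s)`: worst case over `y ∈ [-1,1]^s` of the best approximation error. -/
noncomputable def En {s : ℕ} (n : ℕ) (I : Fin s → Set ℝ) : ℝ :=
  sSup {e : ℝ | ∃ y : Fin s → ℝ, (∀ i, |y i| ≤ 1) ∧ e = bestErr n I y}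

/-- `ε_n(Y;δ)`: the smallest `ε` such that some polynomial of degree `≤ n` maps the
`δ`-neighborhood of each `y ∈ Y` into the `ε`-neighborhood of `y`. -/
noncomputable def epsN (n : ℕ) (Y : Set ℝ) (δ : ℝ) : ℝ :=
  sInf {e : ℝ | ∃ P : Polynomial ℝ, P.natDegree ≤ n ∧
    ∀ y ∈ Y, ∀ t : ℝ, |t - y| ≤ δ → |P.eval t - y| ≤ e}

/-!
For a sign vector `w ∈ {-1,1}^s`, a degree-`n` polynomial `P` within `δ = E_n` of `w` on the
intervals, followed by a degree-`m` polynomial `Q` mapping `[±1 - δ, ±1 + δ]` into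
`[±1 - ε, ±1 + ε]`, gives the degree-`mn` polynomial `Q ∘ P` within `ε` of `w`; the arbitrarily
small excess of `P` over `δ` is absorbed by the continuity of `Q`. The best error is a convex
function of the target vector, so its maximum over the cube `[-1,1]^s` is attained at a sign vector.
-/

open Filter Metric Topology

theorem eventually_mapsTo_closedBall_add {E F : Type*} [NormedAddCommGroup E] [NormedSpace ℝ E]
    [ProperSpace E] [PseudoMetricSpace F] {f : E → F} (hf : Continuous f) {c : E} {c' : F}
    {δ ε θ : ℝ} (hδ : 0 ≤ δ) (hθ : 0 < θ) (h : MapsTo f (closedBall c δ) (closedBall c' ε)) :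
    ∀ᶠ η in 𝓝[>] 0, MapsTo f (closedBall c (δ + η)) (closedBall c' (ε + θ)) := by
  obtain ⟨η₀, hη₀, hsub⟩ := (isCompact_closedBall c δ).exists_cthickening_subset_open
    (isOpen_ball.preimage hf) (h.mono_right (closedBall_subset_ball (lt_add_of_pos_right ε hθ)))
  filter_upwards [Ioo_mem_nhdsGT hη₀] with η hη
  rw [add_comm, ← cthickening_closedBall hη.1.le hδ]
  exact fun u hu => ball_subset_closedBall (hsub (cthickening_mono hη.2.le _ hu))

theorem mem_convexHull_pi_neg_one_one {ι : Type*} [Finite ι] {y : ι → ℝ} (hy : ∀ i, |y i| ≤ 1) :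
    y ∈ convexHull ℝ (univ.pi fun _ => {-1, 1}) := by
  rw [convexHull_pi]
  intro i _
  rw [convexHull_pair, segment_eq_Icc (by norm_num)]
  exact abs_le.1 (hy i)

def approxErrs {s : ℕ} (n : ℕ) (I : Fin s → Set ℝ) (y : Fin s → ℝ) : Set ℝ :=
  {e : ℝ | ∃ P : Polynomial ℝ, P.natDegree ≤ n ∧ ∀ i, ∀ t ∈ I i, |P.eval t - y i| ≤ e}

section bestErr

variable {s k : ℕ} {I : Fin s → Set ℝ} {y : Fin s → ℝ} {e : ℝ}

theorem bestErr_eq_sInf : bestErr k I y = sInf (approxErrs k I y) := rfl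

theorem bestErr_le_of_approx (he : 0 ≤ e) (P : ℝ[X]) (hP : P.natDegree ≤ k)
    (h : ∀ i, ∀ t ∈ I i, |P.eval t - y i| ≤ e) : bestErr k I y ≤ e := by
  by_cases hbdd : BddBelow (approxErrs k I y)
  · exact csInf_le hbdd ⟨P, hP, h⟩
  · rw [bestErr_eq_sInf, Real.sInf_of_not_bddBelow hbdd]
    exact he

theorem bestErr_nonneg : 0 ≤ bestErr k I y := by
  by_cases hI : ∃ i, (I i).Nonempty
  · obtain ⟨i, t, ht⟩ := hI
    exact Real.sInf_nonneg fun e ⟨P, _, hP⟩ => (abs_nonneg _).trans (hP i t ht)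
  · -- every `I i` is empty, so every real is an achievable error, and `sInf univ = 0`
    push Not at hI
    have huniv : approxErrs k I y = univ :=
      eq_univ_of_forall fun e => ⟨0, by simp, fun i t ht => by simp [hI i] at ht⟩
    rw [bestErr_eq_sInf, huniv, Real.sInf_of_not_bddBelow not_bddBelow_univ]

theorem exists_approx_of_bestErr_lt (h : bestErr k I y < e) :
    ∃ P : ℝ[X], P.natDegree ≤ k ∧ ∀ i, ∀ t ∈ I i, |P.eval t - y i| ≤ e := by
  have hne : (approxErrs k I y).Nonempty :=
    ⟨∑ i, |y i|, 0, by simp, fun i _ _ => by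
      simpa using Finset.single_le_sum (fun j _ => abs_nonneg (y j)) (Finset.mem_univ i)⟩
  obtain ⟨e', ⟨P, hPdeg, hP⟩, he'⟩ := exists_lt_of_csInf_lt hne h
  exact ⟨P, hPdeg, fun i t ht => (hP i t ht).trans he'.le⟩

theorem convexOn_bestErr : ConvexOn ℝ univ (bestErr k I) := by
  refine ⟨convex_univ, fun x _ z _ a b ha hb hab => le_of_forall_pos_le_add fun θ hθ => ?_⟩
  obtain ⟨P, hPdeg, hP⟩ := exists_approx_of_bestErr_lt (lt_add_of_pos_right (bestErr k I x) hθ)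
  obtain ⟨R, hRdeg, hR⟩ := exists_approx_of_bestErr_lt (lt_add_of_pos_right (bestErr k I z) hθ)
  have hdeg : (C a * P + C b * R).natDegree ≤ k :=
    natDegree_add_le_of_degree_le ((natDegree_C_mul_le a P).trans hPdeg)
      ((natDegree_C_mul_le b R).trans hRdeg)
  have hx := bestErr_nonneg (k := k) (I := I) (y := x)
  have hz := bestErr_nonneg (k := k) (I := I) (y := z)
  refine bestErr_le_of_approx (by simp only [smul_eq_mul]; positivity) _ hdeg fun i t ht => ?_
  calc |(C a * P + C b * R).eval t - (a • x + b • z) i|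
      = |a * (P.eval t - x i) + b * (R.eval t - z i)| := by
        simp only [eval_add, eval_mul, eval_C, Pi.add_apply, Pi.smul_apply, smul_eq_mul]
        ring_nf
    _ ≤ a * |P.eval t - x i| + b * |R.eval t - z i| :=
      (abs_add_le _ _).trans_eq (by rw [abs_mul, abs_mul, abs_of_nonneg ha, abs_of_nonneg hb])
    _ ≤ a * (bestErr k I x + θ) + b * (bestErr k I z + θ) := by
      gcongr
      exacts [hP i t ht, hR i t ht]
    _ = a • bestErr k I x + b • bestErr k I z + θ := by
      simp only [smul_eq_mul]
      linear_combination θ * hab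

theorem bestErr_mul_le_of_comp {m n : ℕ} {z : Fin s → ℝ} {δ ε : ℝ} {Q : ℝ[X]}
    (hQ : Q.natDegree ≤ m) (hδ : bestErr n I y ≤ δ) (hε : 0 ≤ ε)
    (h : ∀ i, ∀ u, |u - y i| ≤ δ → |Q.eval u - z i| ≤ ε) : bestErr (m * n) I z ≤ ε := by
  refine le_of_forall_pos_le_add fun θ hθ => ?_
  have hmaps (i : Fin s) : MapsTo Q.eval (closedBall (y i) δ) (closedBall (z i) ε) := h i
  obtain ⟨η, hQη, hη⟩ := ((eventually_all.2 fun i => eventually_mapsTo_closedBall_add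
    Q.continuous (bestErr_nonneg.trans hδ) hθ (hmaps i)).and self_mem_nhdsWithin).exists
  obtain ⟨P, hPdeg, hP⟩ := exists_approx_of_bestErr_lt (hδ.trans_lt (lt_add_of_pos_right δ hη))
  refine bestErr_le_of_approx (by positivity) (Q.comp P)
    (natDegree_comp_le.trans (Nat.mul_le_mul hQ hPdeg)) fun i t ht => ?_
  rw [eval_comp]
  exact hQη i (hP i t ht)

theorem bestErr_le_En (hy : ∀ i, |y i| ≤ 1) : bestErr k I y ≤ En k I :=
  le_csSup ⟨1, by
    rintro _ ⟨z, hz, rfl⟩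
    exact bestErr_le_of_approx zero_le_one 0 (by simp) fun i _ _ => by simpa using hz i⟩
    ⟨y, hy, rfl⟩

theorem En_nonneg : 0 ≤ En k I :=
  bestErr_nonneg.trans (bestErr_le_En (y := 0) fun i => by simp)

theorem En_mul_le_epsN (m n : ℕ) (I : Fin s → Set ℝ) :
    En (m * n) I ≤ epsN m {-1, 1} (En n I) := by
  refine le_csInf ⟨1, 0, by simp, by rintro y (rfl | rfl) t - <;> norm_num⟩ ?_
  rintro ε ⟨Q, hQdeg, hQ⟩
  have hε : 0 ≤ ε := (abs_nonneg _).trans (hQ 1 (by simp) 1 (by simpa using En_nonneg))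
  have hvertex (w : Fin s → ℝ) (hw : w ∈ univ.pi fun _ => {-1, 1}) : bestErr (m * n) I w ≤ ε := by
    have hw1 (i : Fin s) : |w i| ≤ 1 := by
      obtain h | h : w i = -1 ∨ w i = 1 := hw i trivial <;> norm_num [h]
    exact bestErr_mul_le_of_comp hQdeg (bestErr_le_En hw1) hε fun i => hQ (w i) (hw i trivial)
  refine csSup_le ⟨_, 0, fun i => by simp, rfl⟩ ?_
  rintro _ ⟨y, hy, rfl⟩
  obtain ⟨w, hw, hyw⟩ := convexOn_bestErr.exists_ge_of_mem_convexHull (subset_univ _)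
    (mem_convexHull_pi_neg_one_one hy)
  exact hyw.trans (hvertex w hw)

end bestErr

theorem En_amplification_general {s : ℕ} (m n : ℕ) (a b : Fin s → ℝ) :
    En (m * n) (fun i => Set.Icc (a i) (b i)) ≤
      epsN m ({-1, 1} : Set ℝ) (En n (fun i => Set.Icc (a i) (b i))) :=
  En_mul_le_epsN m n _

theorem En_amplification {s : ℕ} (m n : ℕ) (a b : Fin s → ℝ)
    (hab : ∀ i, a i ≤ b i)
    (hdisj : Pairwise fun i j => Disjoint (Set.Icc (a i) (b i)) (Set.Icc (a j) (b j))) :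
    En (m * n) (fun i => Set.Icc (a i) (b i)) ≤
      epsN m ({-1, 1} : Set ℝ) (En n (fun i => Set.Icc (a i) (b i))) :=
  En_amplification_general m n a b
end

section
/- Let z₁,…,z_s ∈ ℂ with |z_i − z_j| ≥ 1 for i ≠ j. Then for each n ∈ ℕ there exist polynomials P₁,…,P_s ∈ 𝒫_{ns−1}^ℂ with P₁ + … + P_s ≡ 1, and for every δ < 1/2, every i ≠ j, and every z with |z − z_j| ≤ δ: |P_i(z)| ≤ (2δ)^n (2D+1)^{n(s−1)}, where D := diam{z₁,…,z_s}. -/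
/-!
Let `Q_i = ∏_{k ≠ i} (X - z_k)^n` and let `A_i` be the Taylor polynomial of degree `< n` of
`1 / Q_i` at `z_i`. Then `P_i = A_i(X - z_i) · Q_i` is divisible by `(X - z_j)^n` for `j ≠ i` and
is `≡ 1` modulo `(X - z_i)^n`, so `∑ P_i - 1` is divisible by `∏_j (X - z_j)^n` but has degree
`< ns`; hence `∑ P_i = 1`.

For the estimate, `1 / Q_i(z_i + X) = ∏_{k ≠ i} (X + (z_i - z_k))^{-n}` with `|z_i - z_k| ≥ 1`,
so its coefficients are dominated by those of `(1 - X)^{-n(s-1)}`, which are at most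
`2^{n(s-1)+m}`. This gives `|A_i(w - z_i)| ≤ 2^{n(s-1)} (2D+1)^n`, while
`|Q_i(w)| ≤ δ^n (D + 1/2)^{n(s-2)}` when `|w - z_j| ≤ δ`.
-/

open Polynomial Finset

lemma injective_of_one_le_norm_sub {ι E : Type*} [SeminormedAddGroup E] {z : ι → E}
    (hsep : ∀ i j, i ≠ j → 1 ≤ ‖z i - z j‖) : Function.Injective z := by
  intro i j h
  by_contra hij
  exact (hsep i j hij).not_gt (by simp [h])

lemma geom_sum_le_pow_of_two_le {y : ℝ} (hy : 2 ≤ y) (n : ℕ) : ∑ m ∈ range n, y ^ m ≤ y ^ n := by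
  induction n with
  | zero => simp
  | succ n ih =>
    rw [sum_range_succ, pow_succ]
    nlinarith [pow_nonneg (zero_le_two.trans hy) n]

namespace PowerSeries

variable {R : Type*} [SeminormedCommRing R]

def Majorizes (F : ℝ⟦X⟧) (f : R⟦X⟧) : Prop :=
  ∀ m, ‖coeff m f‖ ≤ coeff m F

lemma majorizes_one [NormOneClass R] : Majorizes (1 : ℝ⟦X⟧) (1 : R⟦X⟧) :=
  fun m => by rw [coeff_one, coeff_one]; split_ifs <;> simp

lemma coeff_mk_one_pow_le (N m : ℕ) : coeff m ((mk 1 : ℝ⟦X⟧) ^ N) ≤ 2 ^ (N + m) := by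
  cases N with
  | zero =>
    rw [pow_zero, coeff_one]
    split_ifs <;> simp [one_le_pow₀]
  | succ d =>
    rw [mk_one_pow_eq_mk_choose_add, coeff_mk]
    calc ((d + m).choose d : ℝ) ≤ 2 ^ (d + m) := by exact_mod_cast Nat.choose_le_two_pow _ _
      _ ≤ 2 ^ (d + 1 + m) := pow_le_pow_right₀ one_le_two (by omega)

namespace Majorizes

variable {F G : ℝ⟦X⟧} {f g : R⟦X⟧}

lemma coeff_nonneg (hf : Majorizes F f) (m : ℕ) : 0 ≤ coeff m F :=
  (norm_nonneg _).trans (hf m)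

lemma mul (hf : Majorizes F f) (hg : Majorizes G g) : Majorizes (F * G) (f * g) := by
  intro m
  rw [coeff_mul, coeff_mul]
  refine (norm_sum_le _ _).trans (sum_le_sum fun p _ => ?_)
  exact (norm_mul_le _ _).trans (mul_le_mul (hf _) (hg _) (norm_nonneg _) (hf.coeff_nonneg _))

lemma pow [NormOneClass R] (hf : Majorizes F f) (n : ℕ) : Majorizes (F ^ n) (f ^ n) := by
  induction n with
  | zero => simpa using majorizes_one
  | succ n ih => rw [pow_succ, pow_succ]; exact ih.mul hf

lemma prod [NormOneClass R] {ι : Type*} {s : Finset ι} {F : ι → ℝ⟦X⟧} {f : ι → R⟦X⟧}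
    (h : ∀ i ∈ s, Majorizes (F i) (f i)) : Majorizes (∏ i ∈ s, F i) (∏ i ∈ s, f i) := by
  classical
  induction s using Finset.induction_on with
  | empty => simpa using majorizes_one
  | insert a s ha ih =>
    rw [prod_insert ha, prod_insert ha]
    exact (h a (mem_insert_self a s)).mul (ih fun i hi => h i (mem_insert_of_mem hi))

lemma C_mul {c : R} (hc : ‖c‖ ≤ 1) (hf : Majorizes F f) : Majorizes F (C c * f) := fun m => by
  rw [coeff_C_mul]
  exact (norm_mul_le _ _).trans ((mul_le_of_le_one_left (norm_nonneg _) hc).trans (hf m))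

lemma rescale [NormOneClass R] {a : R} (ha : ‖a‖ ≤ 1) (hf : Majorizes F f) :
    Majorizes F (rescale a f) := fun m => by
  rw [coeff_rescale]
  have ham : ‖a ^ m‖ ≤ 1 := (norm_pow_le _ _).trans (pow_le_one₀ (norm_nonneg _) ha)
  exact (norm_mul_le _ _).trans ((mul_le_of_le_one_left (norm_nonneg _) ham).trans (hf m))

lemma norm_eval_trunc_le [NormOneClass R] (hf : Majorizes F f) (n : ℕ) (u : R) :
    ‖(trunc n f).eval u‖ ≤ ∑ m ∈ range n, coeff m F * ‖u‖ ^ m := by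
  rw [eval, eval₂_trunc_eq_sum_range]
  refine (norm_sum_le _ _).trans (sum_le_sum fun m _ => ?_)
  exact (norm_mul_le _ _).trans
    (mul_le_mul (hf m) (norm_pow_le _ _) (norm_nonneg _) (hf.coeff_nonneg m))

lemma norm_eval_trunc_le_of_mk_one_pow [NormOneClass R] {N : ℕ} (hf : Majorizes ((mk 1) ^ N) f)
    (n : ℕ) {u : R} {x : ℝ} (hu : ‖u‖ ≤ x) (hx : 1 ≤ x) :
    ‖(trunc n f).eval u‖ ≤ 2 ^ N * (2 * x) ^ n := by
  calc ‖(trunc n f).eval u‖ ≤ ∑ m ∈ range n, coeff m ((mk 1 : ℝ⟦X⟧) ^ N) * ‖u‖ ^ m :=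
        hf.norm_eval_trunc_le n u
    _ ≤ ∑ m ∈ range n, 2 ^ (N + m) * x ^ m :=
        sum_le_sum fun m _ => mul_le_mul (coeff_mk_one_pow_le N m)
          (pow_le_pow_left₀ (norm_nonneg u) hu m) (by positivity) (by positivity)
    _ = 2 ^ N * ∑ m ∈ range n, (2 * x) ^ m := by
        rw [mul_sum]; exact sum_congr rfl fun m _ => by ring
    _ ≤ 2 ^ N * (2 * x) ^ n :=
        mul_le_mul_of_nonneg_left (geom_sum_le_pow_of_two_le (by linarith) n) (by positivity)

end Majorizes

lemma majorizes_mk_one_inv_X_add_C {𝕜 : Type*} [NormedField 𝕜] {c : 𝕜} (hc : 1 ≤ ‖c‖) :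
    Majorizes (mk 1) ((X + C c : 𝕜⟦X⟧)⁻¹) := by
  have hc0 : c ≠ 0 := norm_pos_iff.mp (one_pos.trans_le hc)
  have hinv : (X + C c : 𝕜⟦X⟧)⁻¹ = C c⁻¹ * rescale (-c⁻¹) (mk 1) := by
    rw [inv_eq_iff_mul_eq_one (by simpa using hc0)]
    calc C c⁻¹ * rescale (-c⁻¹) (mk 1) * (X + C c)
        = rescale (-c⁻¹) (mk 1 * (1 - X)) := by
          have hfactor : C c⁻¹ * (X + C c) = 1 - (-C c⁻¹ * X : 𝕜⟦X⟧) := by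
            rw [mul_add, ← map_mul, inv_mul_cancel₀ hc0, map_one]; ring
          rw [map_mul, map_sub, map_one, rescale_X, map_neg, mul_right_comm, hfactor, mul_comm]
      _ = 1 := by rw [mk_one_mul_one_sub_eq_one, map_one]
  have hone : Majorizes (mk 1) (mk 1 : 𝕜⟦X⟧) := fun m => by simp
  rw [hinv]
  exact (hone.rescale (by simpa using inv_le_one_of_one_le₀ hc)).C_mul
    (by simpa using inv_le_one_of_one_le₀ hc)

end PowerSeries

namespace Polynomial

variable {K : Type*} [Field K]

/-- The Taylor polynomial of degree `< n` of `1 / Q` at `a`, in the shifted variable `X - a`. -/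
noncomputable def invJet (n : ℕ) (Q : K[X]) (a : K) : K[X] :=
  PowerSeries.trunc n ((taylor a Q : PowerSeries K)⁻¹)

lemma X_pow_dvd_trunc_inv_mul_sub_one (n : ℕ) {F : K[X]} (hF : F.coeff 0 ≠ 0) :
    X ^ n ∣ PowerSeries.trunc n ((F : PowerSeries K)⁻¹) * F - 1 := by
  set G := (F : PowerSeries K)⁻¹
  have hFG : (F : PowerSeries K) * G = 1 := PowerSeries.mul_inv_cancel _ (by simpa using hF)
  have hdvd : (PowerSeries.X : PowerSeries K) ^ n
      ∣ ((PowerSeries.trunc n G * F - 1 : K[X]) : PowerSeries K) := by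
    have htail : PowerSeries.X ^ n ∣ G - (PowerSeries.trunc n G : PowerSeries K) :=
      ⟨_, sub_eq_iff_eq_add.mpr (PowerSeries.eq_X_pow_mul_shift_add_trunc n G)⟩
    have hexp : ((PowerSeries.trunc n G * F - 1 : K[X]) : PowerSeries K)
        = -((G - PowerSeries.trunc n G) * F) := by
      rw [coe_sub, coe_mul, coe_one, ← hFG]; ring
    rw [hexp, dvd_neg]
    exact htail.mul_right _
  rw [Polynomial.X_pow_dvd_iff]
  intro d hd
  rw [← coeff_coe]
  exact PowerSeries.X_pow_dvd_iff.mp hdvd d hd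

lemma X_sub_C_pow_dvd_taylor_invJet_mul_sub_one (n : ℕ) {Q : K[X]} {a : K} (hQ : Q.eval a ≠ 0) :
    (X - C a) ^ n ∣ taylor (-a) (invJet n Q a) * Q - 1 := by
  have h := _root_.map_dvd (taylorAlgHom (-a))
    (X_pow_dvd_trunc_inv_mul_sub_one n (F := taylor a Q) (by rwa [taylor_coeff_zero]))
  simpa [taylor_taylor, taylor_zero, sub_eq_add_neg, invJet] using h

variable {ι : Type*} [Fintype ι]

lemma eq_zero_of_forall_X_sub_C_pow_dvd {n : ℕ} {z : ι → K} (hz : Function.Injective z)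
    {p : K[X]} (hdvd : ∀ j, (X - C (z j)) ^ n ∣ p) (hdeg : p.natDegree < n * Fintype.card ι) :
    p = 0 := by
  have hprod : ∏ j, (X - C (z j)) ^ n ∣ p :=
    Finset.prod_dvd_of_coprime
      (fun a _ b _ hab => ((pairwise_coprime_X_sub_C hz) hab).pow) (fun j _ => hdvd j)
  have hdeg_prod : (∏ j, (X - C (z j)) ^ n).natDegree = n * Fintype.card ι := by
    rw [natDegree_prod_of_monic _ _ (fun j _ => (monic_X_sub_C (z j)).pow n)]
    simp [mul_comm]
  by_contra hp
  exact (natDegree_le_of_dvd hprod hp).not_gt (hdeg_prod ▸ hdeg)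

variable [DecidableEq ι]

noncomputable def vanishingPoly (n : ℕ) (z : ι → K) (i : ι) : K[X] :=
  ∏ k ∈ univ.erase i, (X - C (z k)) ^ n

noncomputable def partitionPoly (n : ℕ) (z : ι → K) (i : ι) : K[X] :=
  taylor (-z i) (invJet n (vanishingPoly n z i) (z i)) * vanishingPoly n z i

lemma natDegree_vanishingPoly (n : ℕ) (z : ι → K) (i : ι) :
    (vanishingPoly n z i).natDegree = n * (Fintype.card ι - 1) := by
  rw [vanishingPoly, natDegree_prod_of_monic _ _ (fun k _ => (monic_X_sub_C (z k)).pow n)]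
  simp [card_erase_of_mem, mul_comm]

lemma eval_vanishingPoly_self_ne_zero (n : ℕ) {z : ι → K} (hz : Function.Injective z) (i : ι) :
    (vanishingPoly n z i).eval (z i) ≠ 0 := by
  rw [vanishingPoly, eval_prod, prod_ne_zero_iff]
  intro k hk
  rw [eval_pow, eval_sub, eval_X, eval_C]
  exact pow_ne_zero _ (sub_ne_zero.mpr (hz.ne (mem_erase.mp hk).1.symm))

lemma X_sub_C_pow_dvd_partitionPoly (n : ℕ) (z : ι → K) {i j : ι} (hij : i ≠ j) :
    (X - C (z j)) ^ n ∣ partitionPoly n z i :=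
  (dvd_prod_of_mem _ (mem_erase.mpr ⟨hij.symm, mem_univ j⟩)).mul_left _

lemma natDegree_partitionPoly_le {n : ℕ} (hn : 0 < n) (z : ι → K) (i : ι) :
    (partitionPoly n z i).natDegree ≤ n * Fintype.card ι - 1 := by
  have hA : (invJet n (vanishingPoly n z i) (z i)).natDegree ≤ n - 1 := by
    obtain ⟨n, rfl⟩ := Nat.exists_eq_add_of_lt hn
    exact Nat.lt_succ_iff.mp (PowerSeries.natDegree_trunc_lt _ _)
  have hcard : 0 < Fintype.card ι := Fintype.card_pos_iff.mpr ⟨i⟩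
  refine natDegree_mul_le.trans ?_
  rw [natDegree_taylor, natDegree_vanishingPoly, Nat.mul_sub_one]
  have hle : n ≤ n * Fintype.card ι := Nat.le_mul_of_pos_right n hcard
  omega

lemma X_sub_C_pow_dvd_partitionPoly_sub_one (n : ℕ) {z : ι → K} (hz : Function.Injective z)
    (i : ι) : (X - C (z i)) ^ n ∣ partitionPoly n z i - 1 :=
  X_sub_C_pow_dvd_taylor_invJet_mul_sub_one n (eval_vanishingPoly_self_ne_zero n hz i)

lemma sum_partitionPoly {n : ℕ} (hn : 0 < n) {z : ι → K} (hz : Function.Injective z)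
    [Nonempty ι] : ∑ i, partitionPoly n z i = 1 := by
  refine sub_eq_zero.mp (eq_zero_of_forall_X_sub_C_pow_dvd (n := n) hz (fun j => ?_) ?_)
  · rw [← add_sum_erase _ _ (mem_univ j), add_sub_right_comm]
    exact dvd_add (X_sub_C_pow_dvd_partitionPoly_sub_one n hz j)
      (dvd_sum fun i hi => X_sub_C_pow_dvd_partitionPoly n z (mem_erase.mp hi).1)
  · have hpos : 0 < n * Fintype.card ι := Nat.mul_pos hn Fintype.card_pos
    refine (natDegree_sub_le _ _).trans_lt (max_lt ?_ (by simpa using hpos))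
    exact (natDegree_sum_le_of_forall_le _ _ fun i _ => natDegree_partitionPoly_le hn z i).trans_lt
      (Nat.sub_lt hpos one_pos)

lemma coe_taylor_vanishingPoly (n : ℕ) (z : ι → K) (i : ι) :
    ((taylor (z i) (vanishingPoly n z i) : K[X]) : PowerSeries K)
      = ∏ k ∈ univ.erase i, (PowerSeries.X + PowerSeries.C (z i - z k)) ^ n := by
  rw [vanishingPoly, taylor_apply, prod_comp, ← coeToPowerSeries.ringHom_apply, map_prod]
  refine prod_congr rfl fun k _ => ?_
  simp [sub_eq_add_neg, add_assoc]

lemma inv_coe_taylor_vanishingPoly (n : ℕ) {z : ι → K} (hz : Function.Injective z) (i : ι) :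
    ((taylor (z i) (vanishingPoly n z i) : K[X]) : PowerSeries K)⁻¹
      = ∏ k ∈ univ.erase i, (PowerSeries.X + PowerSeries.C (z i - z k))⁻¹ ^ n := by
  have hne : ∀ k ∈ univ.erase i, z i - z k ≠ 0 :=
    fun k hk => sub_ne_zero.mpr (hz.ne (mem_erase.mp hk).1.symm)
  rw [PowerSeries.inv_eq_iff_mul_eq_one, coe_taylor_vanishingPoly, ← prod_mul_distrib]
  · refine prod_eq_one fun k hk => ?_
    rw [← mul_pow, PowerSeries.inv_mul_cancel _ (by simpa using hne k hk), one_pow]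
  · simpa [taylor_coeff_zero] using eval_vanishingPoly_self_ne_zero n hz i

section Estimates

variable {𝕜 : Type*} [NormedField 𝕜] {z : ι → 𝕜}

lemma majorizes_inv_coe_taylor_vanishingPoly (n : ℕ) (hsep : ∀ i j, i ≠ j → 1 ≤ ‖z i - z j‖)
    (i : ι) : PowerSeries.Majorizes ((PowerSeries.mk 1) ^ (n * (Fintype.card ι - 1)))
      ((taylor (z i) (vanishingPoly n z i) : PowerSeries 𝕜)⁻¹) := by
  rw [inv_coe_taylor_vanishingPoly n (injective_of_one_le_norm_sub hsep) i]
  have hprod := PowerSeries.Majorizes.prod fun k (hk : k ∈ univ.erase i) =>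
    (PowerSeries.majorizes_mk_one_inv_X_add_C (hsep i k (mem_erase.mp hk).1.symm)).pow n
  rwa [prod_const, card_erase_of_mem (mem_univ i), card_univ, ← pow_mul] at hprod

lemma norm_eval_vanishingPoly_le (n : ℕ) {i j : ι} (hij : i ≠ j) {w : 𝕜} {δ x : ℝ}
    (hδ : ‖w - z j‖ ≤ δ) (hx : ∀ k, ‖w - z k‖ ≤ x) :
    ‖(vanishingPoly n z i).eval w‖ ≤ δ ^ n * x ^ (n * (Fintype.card ι - 2)) := by
  have hj : j ∈ univ.erase i := mem_erase.mpr ⟨hij.symm, mem_univ j⟩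
  have hx0 : 0 ≤ x := (norm_nonneg _).trans (hx i)
  have hδ0 : 0 ≤ δ := (norm_nonneg _).trans hδ
  rw [vanishingPoly, eval_prod, norm_prod, ← mul_prod_erase _ _ hj]
  simp only [eval_pow, eval_sub, eval_X, eval_C, norm_pow]
  refine mul_le_mul (pow_le_pow_left₀ (norm_nonneg _) hδ n) ?_
    (prod_nonneg fun k _ => by positivity) (by positivity)
  calc ∏ k ∈ (univ.erase i).erase j, ‖w - z k‖ ^ n
      ≤ ∏ k ∈ (univ.erase i).erase j, x ^ n :=
        prod_le_prod (fun k _ => by positivity)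
          fun k _ => pow_le_pow_left₀ (norm_nonneg _) (hx k) n
    _ = x ^ (n * (Fintype.card ι - 2)) := by
        rw [prod_const, card_erase_of_mem hj, card_erase_of_mem (mem_univ i), card_univ,
          ← pow_mul, Nat.sub_sub, mul_comm]

lemma norm_eval_partitionPoly_le (n : ℕ) (hsep : ∀ i j, i ≠ j → 1 ≤ ‖z i - z j‖) {i j : ι}
    (hij : i ≠ j) {w : 𝕜} {δ x : ℝ} (hδ : ‖w - z j‖ ≤ δ) (hx : ∀ k, ‖w - z k‖ ≤ x)
    (hx1 : 1 ≤ x) :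
    ‖(partitionPoly n z i).eval w‖ ≤ (2 * δ) ^ n * (2 * x) ^ (n * (Fintype.card ι - 1)) := by
  have hA : ‖(invJet n (vanishingPoly n z i) (z i)).eval (w - z i)‖
      ≤ 2 ^ (n * (Fintype.card ι - 1)) * (2 * x) ^ n :=
    (majorizes_inv_coe_taylor_vanishingPoly n hsep i).norm_eval_trunc_le_of_mk_one_pow n
      (hx i) hx1
  have hQ := norm_eval_vanishingPoly_le n hij hδ hx
  have hδ0 : 0 ≤ δ := (norm_nonneg _).trans hδ
  obtain ⟨c, hc⟩ : ∃ c, Fintype.card ι = c + 2 :=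
    Nat.exists_eq_add_of_le' (Fintype.one_lt_card_iff.mpr ⟨i, j, hij⟩)
  rw [hc, Nat.add_sub_cancel] at hQ
  rw [hc, Nat.add_sub_assoc one_le_two] at hA
  rw [partitionPoly, eval_mul, taylor_eval, norm_mul, ← sub_eq_add_neg, hc]
  calc ‖(invJet n (vanishingPoly n z i) (z i)).eval (w - z i)‖ * ‖(vanishingPoly n z i).eval w‖
      ≤ 2 ^ (n * (c + 1)) * (2 * x) ^ n * (δ ^ n * x ^ (n * c)) :=
        mul_le_mul hA hQ (norm_nonneg _) (by positivity)
    _ = (2 * δ) ^ n * (2 * x) ^ (n * (c + 2 - 1)) := by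
        rw [Nat.add_sub_assoc one_le_two]; ring

end Estimates

end Polynomial

open Polynomial Complex Metric

theorem partition_polynomials_exist (s n : ℕ) (hs : 1 ≤ s) (hn : 1 ≤ n)
    (z : Fin s → ℂ) (hsep : ∀ i j : Fin s, i ≠ j → 1 ≤ ‖z i - z j‖) :
    ∃ P : Fin s → Polynomial ℂ,
      (∀ i, (P i).natDegree ≤ n * s - 1) ∧
      (∑ i, P i) = 1 ∧
      ∀ δ : ℝ, 0 ≤ δ → δ < 1 / 2 →
        ∀ i j : Fin s, i ≠ j → ∀ w : ℂ, ‖w - z j‖ ≤ δ →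
          ‖(P i).eval w‖ ≤
            (2 * δ) ^ n * (2 * Metric.diam (Set.range z) + 1) ^ (n * (s - 1)) := by
  have : Nonempty (Fin s) := ⟨⟨0, hs⟩⟩
  refine ⟨partitionPoly n z, fun i => by simpa using natDegree_partitionPoly_le hn z i,
    sum_partitionPoly hn (injective_of_one_le_norm_sub hsep), ?_⟩
  intro δ _ hδ i j hij w hw
  set D := Metric.diam (Set.range z)
  have hdiam : ∀ a b, ‖z a - z b‖ ≤ D := fun a b => by
    rw [← dist_eq_norm]
    exact dist_le_diam_of_mem (Set.finite_range z).isBounded ⟨a, rfl⟩ ⟨b, rfl⟩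
  have hx : ∀ k, ‖w - z k‖ ≤ D + 1 / 2 := fun k =>
    calc ‖w - z k‖ ≤ ‖w - z j‖ + ‖z j - z k‖ := norm_sub_le_norm_sub_add_norm_sub _ _ _
      _ ≤ D + 1 / 2 := by linarith [hdiam j k]
  have hD : 1 ≤ D + 1 / 2 := by linarith [hsep i j hij, hdiam i j]
  have hbound := norm_eval_partitionPoly_le n hsep hij hw hx hD
  rwa [Fintype.card_fin, show 2 * (D + 1 / 2) = 2 * D + 1 by ring] at hbound
end

section
/- Let z₁,…,z_s ∈ ℂ with |z_i − z_j| ≥ 1 for i ≠ j, let w₁,…,w_s ∈ ℂ with |w_i| ≤ 1, and n ∈ ℕ. Then there exists a complex polynomial P of degree ≤ ns − 1 such that for every δ < 1/2, max_i max_{|z − z_i| ≤ δ} |P(z) − w_i| ≤ 2(s−1)·(A·δ)^n, where A = 2(1 + 2·diam{z₁,…,z_s})^{s−1}. If all z_i and w_i are real, P can be taken with real coefficients. -/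
/-!
Put `a_ij = (z_i - z_j)⁻¹` and `G_i(X) = ∏_{j ≠ i} (1 + a_ij X)^n`, so that
`G_i(u - z_i) = ∏_{j ≠ i} (a_ij (u - z_j))^n` vanishes to order `n` at every other node. Let `T_i`
be the truncation below degree `n` of the power series `1 / G_i`; then `B_i = G_i T_i ≡ 1 mod X^n`
and `P(u) = ∑ w_i B_i(u - z_i)` has degree `≤ ns - 1`.

Because `|a_ij| ≤ 1`, the coefficients of `1 / G_i` are dominated by those of
`(1 - X)^{-n(s-1)}`, which bounds `T_i`. Near `z_i`, the maximum modulus principle for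
`(1 - B_i) / X^n` on `|X| = 1/2` gives `|B_i - 1| ≤ (2δ)^n (1 + 3^{n(s-1)})`; for `j ≠ i`, the
factor `|a_ji (u - z_i)|^n ≤ δ^n` of `G_j(u - z_j)` makes `B_j(u - z_j)` small. For real data,
averaging `P` with `conj ∘ P ∘ conj` gives real coefficients without increasing the error.
-/

open Polynomial Complex Metric
open scoped PowerSeries ComplexConjugate

namespace PowerSeries

variable {R : Type*} [SeminormedCommRing R]

def MajorizedBy (f : R⟦X⟧) (g : ℝ⟦X⟧) : Prop := ∀ k, ‖coeff k f‖ ≤ coeff k g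

namespace MajorizedBy

variable {f f' : R⟦X⟧} {g g' : ℝ⟦X⟧}

theorem coeff_nonneg (h : MajorizedBy f g) (k : ℕ) : 0 ≤ coeff k g :=
  (norm_nonneg _).trans (h k)

theorem mul (h : MajorizedBy f g) (h' : MajorizedBy f' g') : MajorizedBy (f * f') (g * g') := by
  intro k
  rw [coeff_mul, coeff_mul]
  refine (norm_sum_le _ _).trans (Finset.sum_le_sum fun p _ => ?_)
  exact (norm_mul_le _ _).trans (mul_le_mul (h _) (h' _) (norm_nonneg _) (h.coeff_nonneg _))

theorem one [NormOneClass R] : MajorizedBy (1 : R⟦X⟧) 1 := by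
  intro k
  rcases eq_or_ne k 0 with rfl | hk <;> simp [coeff_one, *]

theorem pow [NormOneClass R] (h : MajorizedBy f g) (n : ℕ) : MajorizedBy (f ^ n) (g ^ n) := by
  induction n with
  | zero => simpa using one
  | succ n ih => simpa [pow_succ] using ih.mul h

theorem prod [NormOneClass R] {ι : Type*} (s : Finset ι) {f : ι → R⟦X⟧} {g : ι → ℝ⟦X⟧}
    (h : ∀ i ∈ s, MajorizedBy (f i) (g i)) : MajorizedBy (∏ i ∈ s, f i) (∏ i ∈ s, g i) := by
  induction s using Finset.cons_induction with
  | empty => simpa using one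
  | cons a s ha ih =>
    simp only [Finset.prod_cons]
    exact (h a (Finset.mem_cons_self a s)).mul (ih fun i hi => h i (Finset.mem_cons_of_mem hi))

theorem norm_eval_trunc_le [NormOneClass R] (h : MajorizedBy f g) (n : ℕ) (v : R) :
    ‖(trunc n f).eval v‖ ≤ ∑ k ∈ Finset.range n, coeff k g * ‖v‖ ^ k := by
  rw [← Polynomial.eval₂_id, eval₂_trunc_eq_sum_range]
  refine (norm_sum_le _ _).trans (Finset.sum_le_sum fun k _ => ?_)
  exact (norm_mul_le _ _).trans
    (mul_le_mul (h k) (norm_pow_le _ _) (norm_nonneg _) (h.coeff_nonneg k))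

end MajorizedBy

theorem rescale_mk_one_majorizedBy [NormOneClass R] {a : R} (ha : ‖a‖ ≤ 1) :
    MajorizedBy (rescale a (mk 1)) (mk 1) := by
  intro k
  simpa [rescale_mk] using (norm_pow_le a k).trans (pow_le_one₀ (norm_nonneg a) ha)

theorem sum_range_coeff_mk_one_pow_mul_le {r : ℝ} (hr0 : 0 ≤ r) (hr1 : r < 1) (N n : ℕ) :
    ∑ k ∈ Finset.range n, coeff k ((mk 1 : ℝ⟦X⟧) ^ N) * r ^ k ≤ 1 / (1 - r) ^ N := by
  rcases N with _ | d
  · simp only [pow_zero, coeff_one, ite_mul, one_mul, zero_mul, Finset.sum_ite_eq',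
      Finset.mem_range]
    split_ifs <;> norm_num
  · rw [mk_one_pow_eq_mk_choose_add]
    have hsum := hasSum_choose_mul_geometric_of_norm_lt_one d (r := r)
      (by rwa [Real.norm_of_nonneg hr0])
    calc _ = ∑ k ∈ Finset.range n, ((k + d).choose d : ℝ) * r ^ k := by simp [add_comm]
      _ ≤ _ := sum_le_hasSum _ (fun k _ => by positivity) hsum

theorem MajorizedBy.norm_eval_trunc_le_of_mk_one_pow [NormOneClass R] {f : R⟦X⟧} {N : ℕ}
    (h : MajorizedBy f (mk 1 ^ N)) (n : ℕ) {ρ : ℝ} (hρ : 1 ≤ ρ) {v : R} (hv : ‖v‖ ≤ ρ / 2) :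
    ‖(trunc n f).eval v‖ ≤ 2 ^ N * ρ ^ (n - 1) := by
  have hc := sum_range_coeff_mk_one_pow_mul_le (r := 1 / 2) (by norm_num) (by norm_num) N n
  rw [show (1 : ℝ) - 1 / 2 = 1 / 2 by norm_num, one_div_pow, one_div_one_div] at hc
  calc ‖(trunc n f).eval v‖ ≤ ∑ k ∈ Finset.range n, coeff k ((mk 1 : ℝ⟦X⟧) ^ N) * ‖v‖ ^ k :=
        h.norm_eval_trunc_le n v
    _ ≤ ∑ k ∈ Finset.range n, coeff k ((mk 1 : ℝ⟦X⟧) ^ N) * (1 / 2) ^ k * ρ ^ (n - 1) := by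
        refine Finset.sum_le_sum fun k hk => ?_
        rw [mul_assoc]
        refine mul_le_mul_of_nonneg_left ?_ (h.coeff_nonneg k)
        calc ‖v‖ ^ k ≤ (1 / 2 * ρ) ^ k := pow_le_pow_left₀ (norm_nonneg v) (by linarith) k
          _ ≤ (1 / 2) ^ k * ρ ^ (n - 1) := by
            rw [mul_pow]
            gcongr
            have := Finset.mem_range.1 hk
            omega
    _ ≤ 2 ^ N * ρ ^ (n - 1) := by
        rw [← Finset.sum_mul]
        exact mul_le_mul_of_nonneg_right hc (by positivity)

end PowerSeries

namespace Polynomial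

theorem X_pow_dvd_one_sub_mul_trunc {R : Type*} [CommRing R] {p : R[X]} {f : R⟦X⟧}
    (h : (p : R⟦X⟧) * f = 1) (n : ℕ) : X ^ n ∣ 1 - p * PowerSeries.trunc n f := by
  rw [X_pow_dvd_iff]
  intro d hd
  have htrunc : PowerSeries.trunc n ((1 - p * PowerSeries.trunc n f : R[X]) : R⟦X⟧) = 0 := by
    rw [coe_sub, coe_mul, PowerSeries.trunc_sub, PowerSeries.trunc_mul_trunc, h, coe_one,
      sub_self]
  rw [← coeff_coe, ← PowerSeries.coeff_coe_trunc_of_lt hd, htrunc, coe_zero, map_zero]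

theorem norm_eval_le_of_X_pow_dvd {p : ℂ[X]} {n : ℕ} (hp : X ^ n ∣ p) {r M : ℝ}
    (hr : 0 < r) (hM : ∀ x : ℂ, ‖x‖ = r → ‖p.eval x‖ ≤ M) {v : ℂ} (hv : ‖v‖ ≤ r) :
    ‖p.eval v‖ ≤ (‖v‖ / r) ^ n * M := by
  obtain ⟨q, rfl⟩ := hp
  have hq : ‖q.eval v‖ ≤ M / r ^ n := by
    refine Complex.norm_le_of_forall_mem_frontier_norm_le isBounded_ball
      q.differentiable.diffContOnCl (fun x hx => ?_)
      (by rwa [closure_ball _ hr.ne', mem_closedBall, dist_zero_right])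
    rw [frontier_ball _ hr.ne', mem_sphere_zero_iff_norm] at hx
    have := hM x hx
    rw [eval_mul, eval_pow, eval_X, norm_mul, norm_pow, hx] at this
    rwa [le_div_iff₀' (by positivity)]
  rw [eval_mul, eval_pow, eval_X, norm_mul, norm_pow, div_pow, div_mul_comm, mul_comm]
  exact mul_le_mul_of_nonneg_right hq (by positivity)

theorem eval_map_conj (p : ℂ[X]) (u : ℂ) :
    (p.map (starRingEnd ℂ)).eval u = conj (p.eval (conj u)) := by
  induction p using Polynomial.induction_on' with
  | add p q hp hq => simp [hp, hq]
  | monomial n a => simp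

theorem exists_im_coeff_eq_zero_norm_eval_sub_le (p : ℂ[X]) :
    ∃ q : ℂ[X], q.natDegree ≤ p.natDegree ∧ (∀ k, (q.coeff k).im = 0) ∧
      ∀ u c : ℂ, c.im = 0 → ‖q.eval u - c‖ ≤ (‖p.eval u - c‖ + ‖p.eval (conj u) - c‖) / 2 := by
  refine ⟨C (1 / 2) * (p + p.map (starRingEnd ℂ)), ?_, fun k => ?_, fun u c hc => ?_⟩
  · refine natDegree_C_mul_le _ _ |>.trans (natDegree_add_le _ _ |>.trans ?_)
    exact max_le le_rfl natDegree_map_le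
  · simp [coeff_map]
  · have hc' : conj c = c := conj_eq_iff_im.2 hc
    have : (C (1 / 2) * (p + p.map (starRingEnd ℂ))).eval u - c =
        ((p.eval u - c) + conj (p.eval (conj u) - c)) / 2 := by
      rw [eval_mul, eval_C, eval_add, eval_map_conj, map_sub, hc']; ring
    rw [this, norm_div, RCLike.norm_ofNat, ← RCLike.norm_conj (p.eval (conj u) - c)]
    gcongr
    exact norm_add_le _ _

end Polynomial

theorem norm_one_add_inv_mul_sub_le {𝕜 : Type*} [NormedField 𝕜] {a b u : 𝕜}
    (h : 1 ≤ ‖a - b‖) : ‖1 + (a - b)⁻¹ * (u - a)‖ ≤ ‖u - b‖ := by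
  have hab : a - b ≠ 0 := norm_pos_iff.1 (by linarith)
  rw [show 1 + (a - b)⁻¹ * (u - a) = (a - b)⁻¹ * (u - b) by field_simp; ring, norm_mul, norm_inv]
  exact mul_le_of_le_one_left (norm_nonneg _) (inv_le_one_of_one_le₀ h)

open Finset

namespace SeparatedNodes

variable {s : ℕ} (z : Fin s → ℂ) (n : ℕ)

theorem card_univ_erase (i : Fin s) : (univ.erase i).card = s - 1 := by simp

noncomputable def nodePoly (i : Fin s) : ℂ[X] :=
  ∏ j ∈ univ.erase i, (1 + C (z i - z j)⁻¹ * X) ^ n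

/-- `rescale (-a) (mk 1)` is the power series of `(1 + a X)⁻¹`. -/
noncomputable def nodePolyInv (i : Fin s) : ℂ⟦X⟧ :=
  ∏ j ∈ univ.erase i, PowerSeries.rescale (-(z i - z j)⁻¹) (PowerSeries.mk 1) ^ n

noncomputable def bump (i : Fin s) : ℂ[X] :=
  nodePoly z n i * PowerSeries.trunc n (nodePolyInv z n i)

noncomputable def interpolant (w : Fin s → ℂ) : ℂ[X] :=
  ∑ i, C (w i) * (bump z n i).comp (X - C (z i))

theorem coe_nodePoly_mul_nodePolyInv (i : Fin s) :
    (nodePoly z n i : ℂ⟦X⟧) * nodePolyInv z n i = 1 := by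
  rw [nodePoly, nodePolyInv, ← Polynomial.coeToPowerSeries.ringHom_apply, map_prod,
    ← prod_mul_distrib]
  refine prod_eq_one fun j _ => ?_
  have h : ((1 + C (z i - z j)⁻¹ * X : ℂ[X]) : ℂ⟦X⟧) =
      PowerSeries.rescale (-(z i - z j)⁻¹) (1 - PowerSeries.X) := by
    simp [PowerSeries.rescale_X, sub_eq_add_neg]
  rw [map_pow, Polynomial.coeToPowerSeries.ringHom_apply, h, ← mul_pow, ← map_mul, mul_comm,
    PowerSeries.mk_one_mul_one_sub_eq_one, map_one, one_pow]

theorem X_pow_dvd_one_sub_bump (i : Fin s) : X ^ n ∣ 1 - bump z n i :=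
  X_pow_dvd_one_sub_mul_trunc (coe_nodePoly_mul_nodePolyInv z n i) n

theorem natDegree_nodePoly_le (i : Fin s) : (nodePoly z n i).natDegree ≤ n * (s - 1) := by
  refine (natDegree_prod_le _ _).trans ?_
  refine (sum_le_card_nsmul _ _ n fun j _ => ?_).trans ?_
  · refine natDegree_pow_le.trans (mul_le_of_le_one_right' ?_)
    rw [add_comm, ← C_1]
    exact natDegree_linear_le
  · rw [card_univ_erase, smul_eq_mul, mul_comm]

theorem natDegree_bump_le (i : Fin s) : (bump z n i).natDegree ≤ n * (s - 1) + (n - 1) := by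
  refine natDegree_mul_le.trans (add_le_add (natDegree_nodePoly_le z n i) ?_)
  rcases n with _ | n
  · simp
  · exact Nat.lt_succ_iff.1 (PowerSeries.natDegree_trunc_lt _ _)

theorem natDegree_interpolant_le (w : Fin s → ℂ) : (interpolant z n w).natDegree ≤ n * s - 1 := by
  refine natDegree_sum_le_of_forall_le _ _ fun i _ => ?_
  refine (natDegree_C_mul_le _ _).trans ?_
  rw [natDegree_comp, natDegree_X_sub_C, mul_one]
  have : n * s = n * (s - 1) + n := by
    rw [← Nat.mul_succ, Nat.succ_eq_add_one, Nat.sub_add_cancel i.pos]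
  have := natDegree_bump_le z n i
  rcases n.eq_zero_or_pos with rfl | hn
  · simpa using this
  · omega

variable {z}

theorem norm_inv_sub_le_one (hsep : Pairwise fun i j => 1 ≤ ‖z i - z j‖) {i j : Fin s}
    (hij : i ≠ j) : ‖(z i - z j)⁻¹‖ ≤ 1 := by
  rw [norm_inv]
  exact inv_le_one_of_one_le₀ (hsep hij)

theorem nodePolyInv_majorizedBy (hsep : Pairwise fun i j => 1 ≤ ‖z i - z j‖) (i : Fin s) :
    (nodePolyInv z n i).MajorizedBy (PowerSeries.mk 1 ^ (n * (s - 1))) := by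
  rw [pow_mul, ← card_univ_erase i, ← prod_const]
  refine PowerSeries.MajorizedBy.prod _ fun j hj =>
    (PowerSeries.rescale_mk_one_majorizedBy ?_).pow n
  rw [norm_neg]
  exact norm_inv_sub_le_one hsep (ne_of_mem_erase hj).symm

theorem norm_eval_nodePoly_le (hsep : Pairwise fun i j => 1 ≤ ‖z i - z j‖) (i : Fin s) {x : ℂ}
    (hx : ‖x‖ ≤ 1 / 2) :
    ‖(nodePoly z n i).eval x‖ ≤ (3 / 2) ^ (n * (s - 1)) := by
  rw [pow_mul, ← card_univ_erase i, ← prod_const, nodePoly, eval_prod, norm_prod]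
  refine prod_le_prod (fun _ _ => norm_nonneg _) fun j hj => ?_
  rw [eval_pow, norm_pow]
  refine pow_le_pow_left₀ (norm_nonneg _) ?_ n
  simp only [eval_add, eval_one, eval_mul, eval_C, eval_X]
  have := norm_inv_sub_le_one hsep (ne_of_mem_erase hj).symm
  calc ‖1 + (z i - z j)⁻¹ * x‖ ≤ 1 + 1 * (1 / 2) := by
        refine (norm_add_le _ _).trans ?_
        rw [norm_one, norm_mul]
        gcongr
    _ = 3 / 2 := by norm_num

theorem norm_eval_bump_sub_one_le (hsep : Pairwise fun i j => 1 ≤ ‖z i - z j‖) (i : Fin s)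
    {v : ℂ} (hv : ‖v‖ ≤ 1 / 2) :
    ‖(bump z n i).eval v - 1‖ ≤ (2 * ‖v‖) ^ n * (1 + 3 ^ (n * (s - 1))) := by
  have hM : ∀ x : ℂ, ‖x‖ = 1 / 2 → ‖(1 - bump z n i).eval x‖ ≤ 1 + 3 ^ (n * (s - 1)) := by
    intro x hx
    have hT := (nodePolyInv_majorizedBy n hsep i).norm_eval_trunc_le_of_mk_one_pow n le_rfl
      (v := x) hx.le
    rw [one_pow, mul_one] at hT
    rw [eval_sub, eval_one, bump, eval_mul]
    calc ‖1 - (nodePoly z n i).eval x * (PowerSeries.trunc n (nodePolyInv z n i)).eval x‖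
        ≤ 1 + (3 / 2) ^ (n * (s - 1)) * 2 ^ (n * (s - 1)) := by
          refine (norm_sub_le _ _).trans ?_
          rw [norm_one, norm_mul]
          gcongr
          exact norm_eval_nodePoly_le n hsep i hx.le
      _ = 1 + 3 ^ (n * (s - 1)) := by rw [← mul_pow]; norm_num
  have := norm_eval_le_of_X_pow_dvd (X_pow_dvd_one_sub_bump z n i) (by norm_num) hM hv
  rw [eval_sub, eval_one, norm_sub_rev, one_div, div_inv_eq_mul] at this
  exact this.trans_eq (by ring)

theorem norm_eval_nodePoly_sub_le (hsep : Pairwise fun i j => 1 ≤ ‖z i - z j‖)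
    {D : ℝ} (hD : ∀ a b, ‖z a - z b‖ ≤ D) {i j : Fin s} (hji : j ≠ i) {δ : ℝ} {u : ℂ}
    (hu : ‖u - z i‖ ≤ δ) :
    ‖(nodePoly z n j).eval (u - z j)‖ ≤ δ ^ n * (δ + D) ^ (n * (s - 2)) := by
  have hfactor : ∀ k ∈ univ.erase j,
      ‖(1 + C (z j - z k)⁻¹ * X : ℂ[X]).eval (u - z j)‖ ≤ ‖u - z k‖ := fun k hk => by
    simpa using norm_one_add_inv_mul_sub_le (u := u) (hsep (ne_of_mem_erase hk).symm)
  have hδ : 0 ≤ δ := (norm_nonneg _).trans hu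
  have hi : i ∈ univ.erase j := mem_erase.2 ⟨hji.symm, mem_univ i⟩
  have hcard : ((univ.erase j).erase i).card = s - 2 := by
    rw [card_erase_of_mem hi, card_univ_erase]; rfl
  rw [nodePoly, eval_prod, norm_prod, ← mul_prod_erase _ _ hi, pow_mul, ← hcard,
    ← prod_const]
  refine mul_le_mul ?_ (prod_le_prod (fun _ _ => norm_nonneg _) fun k hk => ?_)
    (prod_nonneg fun _ _ => norm_nonneg _) (by positivity)
  · rw [eval_pow, norm_pow]
    exact pow_le_pow_left₀ (norm_nonneg _) ((hfactor i hi).trans hu) n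
  · rw [eval_pow, norm_pow]
    refine pow_le_pow_left₀ (norm_nonneg _) ((hfactor k (mem_of_mem_erase hk)).trans ?_) n
    exact (norm_sub_le_norm_sub_add_norm_sub u (z i) (z k)).trans (add_le_add hu (hD i k))

theorem norm_eval_bump_sub_le (hsep : Pairwise fun i j => 1 ≤ ‖z i - z j‖)
    {D : ℝ} (hD : ∀ a b, ‖z a - z b‖ ≤ D) {i j : Fin s} (hji : j ≠ i) {δ : ℝ} {u : ℂ}
    (hu : ‖u - z i‖ ≤ δ) :
    ‖(bump z n j).eval (u - z j)‖ ≤ (2 * δ) ^ n * (2 * (δ + D)) ^ (n * (s - 1) - 1) := by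
  obtain ⟨m, rfl⟩ : ∃ m, s = m + 2 := ⟨s - 2, by have := Fin.val_ne_of_ne hji; omega⟩
  have hδ : 0 ≤ δ := (norm_nonneg _).trans hu
  have hρ : 1 ≤ 2 * (δ + D) := by linarith [hsep hji, hD j i]
  have huj : ‖u - z j‖ ≤ 2 * (δ + D) / 2 := by
    linarith [norm_sub_le_norm_sub_add_norm_sub u (z i) (z j), hD i j]
  have hT := (nodePolyInv_majorizedBy n hsep j).norm_eval_trunc_le_of_mk_one_pow n hρ huj
  have hN : n * (m + 2 - 1) = n * m + n := by rw [show m + 2 - 1 = m + 1 by omega]; ring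
  have hN' : n * m + n - 1 = n * m + (n - 1) := by
    rcases n.eq_zero_or_pos with rfl | hn
    · simp
    · omega
  rw [hN] at hT
  rw [bump, eval_mul, norm_mul, hN, hN', pow_add,
    mul_pow 2 (δ + D) (n * m)]
  calc _ ≤ (δ ^ n * (δ + D) ^ (n * m)) * (2 ^ (n * m + n) * (2 * (δ + D)) ^ (n - 1)) :=
        mul_le_mul (norm_eval_nodePoly_sub_le n hsep hD hji hu) hT (norm_nonneg _)
          (mul_nonneg (pow_nonneg hδ n) (pow_nonneg (by linarith) _))
    _ = _ := by ring

theorem norm_eval_interpolant_sub_le_sum (w : Fin s → ℂ) (hw : ∀ i, ‖w i‖ ≤ 1) (i : Fin s) (u : ℂ) :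
    ‖(interpolant z n w).eval u - w i‖ ≤
      ‖(bump z n i).eval (u - z i) - 1‖ + ∑ j ∈ univ.erase i, ‖(bump z n j).eval (u - z j)‖ := by
  have heval : (interpolant z n w).eval u - w i = w i * ((bump z n i).eval (u - z i) - 1) +
      ∑ j ∈ univ.erase i, w j * (bump z n j).eval (u - z j) := by
    simp only [interpolant, eval_finsetSum, eval_mul, eval_C, eval_comp, eval_sub, eval_X]
    rw [← add_sum_erase _ _ (mem_univ i)]
    ring
  rw [heval]
  refine (norm_add_le _ _).trans
    (add_le_add ?_ ((norm_sum_le _ _).trans (sum_le_sum fun j _ => ?_))) <;>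
  · rw [norm_mul]
    exact mul_le_of_le_one_left (norm_nonneg _) (hw _)

theorem norm_eval_interpolant_sub_le_of_norm_sub_le (hs : 2 ≤ s) (hn : 1 ≤ n)
    (hsep : Pairwise fun i j => 1 ≤ ‖z i - z j‖) {D : ℝ} (hD : ∀ a b, ‖z a - z b‖ ≤ D)
    {w : Fin s → ℂ} (hw : ∀ i, ‖w i‖ ≤ 1) {δ : ℝ} (hδ : δ < 1 / 2) {i : Fin s} {u : ℂ}
    (hu : ‖u - z i‖ ≤ δ) :
    ‖(interpolant z n w).eval u - w i‖ ≤
      2 * (s - 1 : ℝ) * ((2 * (1 + 2 * D) ^ (s - 1)) * δ) ^ n := by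
  set N := n * (s - 1)
  set q := 1 + 2 * D
  have hδ0 : 0 ≤ δ := (norm_nonneg _).trans hu
  have hD1 : 1 ≤ D := (hsep (i := ⟨0, by omega⟩) (j := ⟨1, by omega⟩) (by simp)).trans (hD _ _)
  have hN : 1 ≤ N := Nat.mul_pos hn (by omega)
  have hnear : ‖(bump z n i).eval (u - z i) - 1‖ ≤ (2 * δ) ^ n * (1 + 3 ^ N) :=
    (norm_eval_bump_sub_one_le n hsep i (hu.trans hδ.le)).trans (by gcongr)
  have hfar (j) (hj : j ∈ univ.erase i) :
      ‖(bump z n j).eval (u - z j)‖ ≤ (2 * δ) ^ n * q ^ (N - 1) :=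
    (norm_eval_bump_sub_le n hsep hD (ne_of_mem_erase hj) hu).trans
      (by gcongr; linarith)
  have hq : 3 ≤ q := by linarith
  have hqN : q ^ N = q * q ^ (N - 1) := by rw [← pow_succ', Nat.sub_add_cancel hN]
  have h3 : (3 : ℝ) ^ N ≤ q * q ^ (N - 1) := hqN ▸ pow_le_pow_left₀ (by norm_num) hq N
  have ht : 1 ≤ q ^ (N - 1) := one_le_pow₀ (by linarith)
  have hs' : (1 : ℝ) ≤ s - 1 := by
    have : (2 : ℝ) ≤ s := by exact_mod_cast hs
    linarith
  calc _ ≤ (2 * δ) ^ n * (1 + 3 ^ N) + (s - 1 : ℝ) * ((2 * δ) ^ n * q ^ (N - 1)) := by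
        refine (norm_eval_interpolant_sub_le_sum n w hw i u).trans (add_le_add hnear ?_)
        refine (sum_le_card_nsmul _ _ _ hfar).trans_eq ?_
        rw [card_univ_erase, nsmul_eq_mul, Nat.cast_sub (by omega), Nat.cast_one]
    _ ≤ (2 * δ) ^ n * (2 * (s - 1 : ℝ) * q ^ N) := by
        rw [mul_left_comm _ ((2 * δ) ^ n), ← mul_add]
        refine mul_le_mul_of_nonneg_left ?_ (by positivity)
        rw [hqN]
        have hσt : 1 ≤ (s - 1 : ℝ) * q ^ (N - 1) := one_le_mul_of_one_le_of_one_le hs' ht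
        nlinarith [mul_le_mul_of_nonneg_left hq (by linarith : (0 : ℝ) ≤ (s - 1) * q ^ (N - 1)),
          le_mul_of_one_le_left (by positivity : (0 : ℝ) ≤ q * q ^ (N - 1)) hs']
    _ = _ := by rw [mul_pow, mul_pow, mul_pow, ← pow_mul']; ring

theorem exists_natDegree_le_forall_norm_eval_sub_le (hs : 1 ≤ s) (hn : 1 ≤ n)
    (hsep : Pairwise fun i j => 1 ≤ ‖z i - z j‖) (w : Fin s → ℂ) (hw : ∀ i, ‖w i‖ ≤ 1) :
    ∃ P : ℂ[X], P.natDegree ≤ n * s - 1 ∧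
      ∀ δ : ℝ, δ < 1 / 2 → ∀ i u, ‖u - z i‖ ≤ δ →
        ‖P.eval u - w i‖ ≤
          2 * (s - 1 : ℝ) * ((2 * (1 + 2 * diam (Set.range z)) ^ (s - 1)) * δ) ^ n := by
  rcases hs.eq_or_lt with rfl | hs
  · exact ⟨C (w 0), by simp, fun δ _ i u _ => by simp [Subsingleton.elim i 0]⟩
  have hD (a b : Fin s) : ‖z a - z b‖ ≤ diam (Set.range z) := by
    rw [← dist_eq_norm]
    exact dist_le_diam_of_mem (Set.finite_range z).isBounded (Set.mem_range_self a)
      (Set.mem_range_self b)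
  exact ⟨interpolant z n w, natDegree_interpolant_le z n w, fun δ hδ i u hu =>
    norm_eval_interpolant_sub_le_of_norm_sub_le n hs hn hsep hD hw hδ hu⟩

end SeparatedNodes

theorem small_delta_interpolation (s n : ℕ) (hs : 1 ≤ s) (hn : 1 ≤ n)
    (z : Fin s → ℂ) (hsep : ∀ i j : Fin s, i ≠ j → 1 ≤ ‖z i - z j‖)
    (w : Fin s → ℂ) (hw : ∀ i, ‖w i‖ ≤ 1) :
    ∃ P : Polynomial ℂ, P.natDegree ≤ n * s - 1 ∧
      (∀ δ : ℝ, 0 ≤ δ → δ < 1 / 2 →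
        ∀ i : Fin s, ∀ u : ℂ, ‖u - z i‖ ≤ δ →
          ‖P.eval u - w i‖ ≤
            2 * (s - 1 : ℝ) *
              ((2 * (1 + 2 * Metric.diam (Set.range z)) ^ (s - 1)) * δ) ^ n) ∧
      ((∀ i, (z i).im = 0) → (∀ i, (w i).im = 0) → ∀ k, (P.coeff k).im = 0) := by
  obtain ⟨P, hdeg, hP⟩ :=
    SeparatedNodes.exists_natDegree_le_forall_norm_eval_sub_le n hs hn hsep w hw
  by_cases hreal : (∀ i, (z i).im = 0) ∧ ∀ i, (w i).im = 0
  · obtain ⟨Q, hQdeg, hQre, hQ⟩ := P.exists_im_coeff_eq_zero_norm_eval_sub_le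
    refine ⟨Q, hQdeg.trans hdeg, fun δ _ hδ i u hu => ?_, fun _ _ => hQre⟩
    have hu' : ‖conj u - z i‖ ≤ δ := by
      rwa [← conj_eq_iff_im.2 (hreal.1 i), ← map_sub, RCLike.norm_conj]
    linarith [hQ u (w i) (hreal.2 i), hP δ hδ i u hu, hP δ hδ i (conj u) hu']
  · exact ⟨P, hdeg, fun δ _ => hP δ, fun hz hw' => absurd ⟨hz, hw'⟩ hreal⟩
end

section
/- Fix s ∈ ℕ and u > 0. There exists a constant C = C(s,u) such that for any disjoint closed intervals I₁,…,I_s with minimal gap σ, maximal half-length δ, and diameter D of the union satisfying σ/D ≥ u, and for all y₁,…,y_s ∈ [−1,1] and n ∈ ℕ, there exists a polynomial P of degree ≤ n with |P(t) − y_i| ≤ (C·δ/D)^{⌊(n+1)/s⌋} for all t ∈ I_i, all i. -/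
/-!
Let `m = ⌊(n + 1) / s⌋` and let `a i` be the left endpoint of `I i`. The Hermite-type basis
polynomial `g i t = B i t * T i (t - a i)`, where `B i t = ∏ j ≠ i, ((t - a j) / (a i - a j)) ^ m`
and `T i` is the truncation below degree `m` of the power series `1 / B i (a i + w)`, has degree
`< s * m`, vanishes to order `m` at every `a j` with `j ≠ i`, and is `≡ 1` to order `m` at `a i`.
Dominating the coefficients of `B i` and `T i` by those of majorant series and evaluating these at
`w = σ / 2` gives `|g i - 1| ≤ (K * δ / σ) ^ m` on `I i` and `|g i| ≤ (K * δ / σ) ^ m` on the other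
intervals, with `K` depending only on `s` and `D / σ ≤ 1 / u`; then `P = ∑ i, y i * g i` works.
If `4 * δ > σ` the claimed bound is at least `1` and `P = 0` works.
-/

open Polynomial Finset

section

variable {K : Type*} [Field K] [LinearOrder K] [IsStrictOrderedRing K]

theorem geom_sum_inv_two_le (m : ℕ) : ∑ r ∈ range m, (2⁻¹ : K) ^ r ≤ 2 := by
  have h := geom_sum_Ico_le_of_lt_one (m := 0) (n := m) (x := (2⁻¹ : K)) (by norm_num)
    (by norm_num)
  rw [← range_eq_Ico] at h
  exact h.trans_eq (by norm_num)

theorem abs_sum_mul_sub_le {ι : Type*} [Fintype ι] [DecidableEq ι] {y g : ι → K} {ε : K} (k : ι)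
    (hy : ∀ i, |y i| ≤ 1) (hg : ∀ i, |g i - if i = k then 1 else 0| ≤ ε) :
    |∑ i, y i * g i - y k| ≤ Fintype.card ι * ε := by
  have hsplit : ∑ i, y i * g i - y k = ∑ i, y i * (g i - if i = k then 1 else 0) := by
    simp only [mul_sub, sum_sub_distrib, mul_ite, mul_one, mul_zero, sum_ite_eq', mem_univ,
      if_true]
  rw [hsplit, ← nsmul_eq_mul, ← card_univ, ← sum_const]
  refine (abs_sum_le_sum_abs _ _).trans (sum_le_sum fun i _ => ?_)
  rw [abs_mul]
  exact (mul_le_mul (hy i) (hg i) (abs_nonneg _) zero_le_one).trans_eq (one_mul ε)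

end

namespace Polynomial

variable {K : Type*} [Field K] [LinearOrder K] [IsStrictOrderedRing K]

def Majorizes (P p : K[X]) : Prop := ∀ j, |p.coeff j| ≤ P.coeff j

namespace Majorizes

variable {P Q p q : K[X]}

theorem coeff_nonneg (h : Majorizes P p) (j : ℕ) : 0 ≤ P.coeff j :=
  (abs_nonneg _).trans (h j)

theorem one : Majorizes (1 : K[X]) 1 := fun j => by
  rw [coeff_one]; split_ifs <;> simp

theorem C_mul_X {a b : K} (hab : |a| ≤ b) : Majorizes (C b * X) (C a * X) := fun j => by
  rw [coeff_C_mul_X, coeff_C_mul_X]; split_ifs <;> simp [hab]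

theorem add (hp : Majorizes P p) (hq : Majorizes Q q) : Majorizes (P + Q) (p + q) := fun j => by
  rw [coeff_add, coeff_add]; exact (abs_add_le _ _).trans (add_le_add (hp j) (hq j))

theorem sub (hp : Majorizes P p) (hq : Majorizes Q q) : Majorizes (P + Q) (p - q) := fun j => by
  rw [coeff_sub, coeff_add]; exact (abs_sub _ _).trans (add_le_add (hp j) (hq j))

theorem mul (hp : Majorizes P p) (hq : Majorizes Q q) : Majorizes (P * Q) (p * q) := fun j => by
  rw [coeff_mul, coeff_mul]
  refine (abs_sum_le_sum_abs _ _).trans (sum_le_sum fun x _ => ?_)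
  rw [abs_mul]
  exact mul_le_mul (hp x.1) (hq x.2) (abs_nonneg _) (hp.coeff_nonneg x.1)

theorem pow (hp : Majorizes P p) (k : ℕ) : Majorizes (P ^ k) (p ^ k) := by
  induction k with
  | zero => simpa using one
  | succ k ih => simpa only [pow_succ] using ih.mul hp

theorem sum {ι : Type*} {s : Finset ι} {F f : ι → K[X]} (h : ∀ i ∈ s, Majorizes (F i) (f i)) :
    Majorizes (∑ i ∈ s, F i) (∑ i ∈ s, f i) := fun j => by
  rw [finsetSum_coeff, finsetSum_coeff]
  exact (abs_sum_le_sum_abs _ _).trans (sum_le_sum fun i hi => h i hi j)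

theorem prod {ι : Type*} {s : Finset ι} {F f : ι → K[X]} (h : ∀ i ∈ s, Majorizes (F i) (f i)) :
    Majorizes (∏ i ∈ s, F i) (∏ i ∈ s, f i) := by
  classical
  induction s using Finset.induction_on with
  | empty => simpa using one
  | insert a s ha ih =>
    rw [prod_insert ha, prod_insert ha]
    exact (h a (mem_insert_self a s)).mul (ih fun i hi => h i (mem_insert_of_mem hi))

theorem trunc (hp : Majorizes P p) (m : ℕ) :
    Majorizes P (PowerSeries.trunc m (p : PowerSeries K)) := fun j => by
  rw [PowerSeries.coeff_trunc, coeff_coe]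
  split_ifs
  · exact hp j
  · simpa using hp.coeff_nonneg j

theorem abs_eval_le_mul_eval (hp : Majorizes P p) {w x c : K} (hc : 0 ≤ c) (hx : 0 ≤ x)
    (hw : ∀ j, p.coeff j ≠ 0 → |w| ^ j ≤ c * x ^ j) : |p.eval w| ≤ c * P.eval x := by
  set N := max p.natDegree P.natDegree + 1
  rw [eval_eq_sum_range' (by omega : p.natDegree < N),
    eval_eq_sum_range' (by omega : P.natDegree < N), mul_sum]
  refine (abs_sum_le_sum_abs _ _).trans (sum_le_sum fun j _ => ?_)
  rw [abs_mul, abs_pow]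
  by_cases hj : p.coeff j = 0
  · rw [hj, abs_zero, zero_mul]
    exact mul_nonneg hc (mul_nonneg (hp.coeff_nonneg j) (pow_nonneg hx j))
  · calc |p.coeff j| * |w| ^ j ≤ P.coeff j * (c * x ^ j) :=
          mul_le_mul (hp j) (hw j hj) (by positivity) (hp.coeff_nonneg j)
      _ = c * (P.coeff j * x ^ j) := by ring

theorem abs_eval_le_of_X_pow_dvd (hp : Majorizes P p) {m : ℕ} (hdvd : X ^ m ∣ p) {w x : K}
    (hx : 0 < x) (hw : |w| ≤ x) : |p.eval w| ≤ (|w| / x) ^ m * P.eval x := by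
  refine hp.abs_eval_le_mul_eval (by positivity) hx.le fun j hj => ?_
  have hmj : m ≤ j := by
    by_contra! h
    exact hj (X_pow_dvd_iff.mp hdvd j h)
  calc |w| ^ j = (|w| / x) ^ j * x ^ j := by rw [div_pow, div_mul_cancel₀ _ (by positivity)]
    _ ≤ (|w| / x) ^ m * x ^ j := mul_le_mul_of_nonneg_right
        (pow_le_pow_of_le_one (by positivity) (div_le_one_of_le₀ hw hx.le) hmj) (by positivity)

theorem abs_eval_le_of_natDegree_le (hp : Majorizes P p) {d : ℕ} (hd : p.natDegree ≤ d)
    {w x : K} (hx : 0 < x) (hw : x ≤ |w|) : |p.eval w| ≤ (|w| / x) ^ d * P.eval x := by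
  refine hp.abs_eval_le_mul_eval (by positivity) hx.le fun j hj => ?_
  calc |w| ^ j = (|w| / x) ^ j * x ^ j := by rw [div_pow, div_mul_cancel₀ _ (by positivity)]
    _ ≤ (|w| / x) ^ d * x ^ j := by
      gcongr
      exacts [(one_le_div hx).mpr hw, le_natDegree_of_ne_zero hj |>.trans hd]

end Majorizes

end Polynomial

namespace PowerSeries

variable {R : Type*} [CommRing R]

theorem X_pow_dvd_coe_sub_trunc (p : R[X]) (m : ℕ) :
    (Polynomial.X : R[X]) ^ m ∣ p - trunc m (p : PowerSeries R) := by
  rw [Polynomial.X_pow_dvd_iff]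
  intro d hd
  rw [Polynomial.coeff_sub, coeff_trunc, if_pos hd, Polynomial.coeff_coe, sub_self]

theorem natDegree_trunc_le_pred (f : PowerSeries R) (m : ℕ) : (trunc m f).natDegree ≤ m - 1 := by
  cases m with
  | zero => simp
  | succ m => exact Nat.lt_succ_iff.mp (natDegree_trunc_lt f m)

end PowerSeries

namespace Polynomial

variable {ι : Type*}

section NodePoly

variable {R : Type*} [CommRing R]

noncomputable def nodePoly (S : Finset ι) (e : ι → R) (m : ℕ) : R[X] :=
  ∏ j ∈ S, (1 + C (e j) * X) ^ m

/-- The truncation below degree `m` of a power series inverse of `nodePoly S e m`. -/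
noncomputable def nodePolyInv (S : Finset ι) (e : ι → R) (m : ℕ) : R[X] :=
  PowerSeries.trunc m (∏ j ∈ S, (∑ r ∈ range m, (C (-e j) * X) ^ r) ^ m : R[X])

variable (S : Finset ι) (e : ι → R) (m : ℕ)

theorem X_pow_dvd_nodePoly_mul_nodePolyInv_sub_one :
    X ^ m ∣ nodePoly S e m * nodePolyInv S e m - 1 := by
  set U : R[X] := ∏ j ∈ S, (∑ r ∈ range m, (C (-e j) * X) ^ r) ^ m
  set π := Ideal.Quotient.mk (Ideal.span {(X : R[X]) ^ m})
  have hπ {p : R[X]} : X ^ m ∣ p ↔ π p = 0 := by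
    rw [Ideal.Quotient.eq_zero_iff_mem, Ideal.mem_span_singleton]
  have hT : π (nodePolyInv S e m) = π U := by
    rw [eq_comm, ← sub_eq_zero, ← map_sub, ← hπ]
    exact PowerSeries.X_pow_dvd_coe_sub_trunc U m
  have hz (j : ι) : π ((C (-e j) * X) ^ m) = 0 := hπ.mp (by rw [mul_pow]; exact dvd_mul_left _ _)
  rw [hπ, map_sub, map_mul, hT, map_one, sub_eq_zero, nodePoly, ← map_mul, ← prod_mul_distrib]
  have hgeom (j : ι) :
      (1 + C (e j) * X) * ∑ r ∈ range m, (C (-e j) * X) ^ r = 1 - (C (-e j) * X) ^ m := by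
    rw [← mul_neg_geom_sum, C_neg, neg_mul, sub_neg_eq_add]
  simp only [← mul_pow, hgeom, map_prod, map_pow, map_sub, map_one, hz, sub_zero, one_pow,
    prod_const_one]

theorem natDegree_nodePoly_le : (nodePoly S e m).natDegree ≤ S.card * m := by
  refine (natDegree_prod_le _ _).trans ?_
  rw [card_eq_sum_ones, sum_mul]
  refine sum_le_sum fun j _ => natDegree_pow_le.trans ?_
  rw [one_mul, mul_comm]
  have hlin : (1 + C (e j) * X).natDegree ≤ 1 :=
    (natDegree_add_le _ _).trans (max_le (by simp) ((natDegree_C_mul_le _ _).trans natDegree_X_le))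
  exact (Nat.mul_le_mul_right m hlin).trans_eq (one_mul m)

theorem natDegree_nodePolyInv_le : (nodePolyInv S e m).natDegree ≤ m - 1 :=
  PowerSeries.natDegree_trunc_le_pred _ m

end NodePoly

variable {K : Type*} [Field K] [LinearOrder K] [IsStrictOrderedRing K]

section NodePolyBounds

variable {S : Finset ι} {e : ι → K}

theorem majorizes_nodePoly {b : K} (hb : ∀ j ∈ S, |e j| ≤ b) (m : ℕ) :
    Majorizes ((1 + C b * X) ^ (S.card * m)) (nodePoly S e m) := by
  rw [pow_mul', ← prod_const]
  exact Majorizes.prod fun j hj => (Majorizes.one.add (Majorizes.C_mul_X (hb j hj))).pow m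

theorem majorizes_nodePolyInv {b : K} (hb : ∀ j ∈ S, |e j| ≤ b) (m : ℕ) :
    Majorizes ((∑ r ∈ range m, (C b * X) ^ r) ^ (S.card * m)) (nodePolyInv S e m) := by
  refine Majorizes.trunc ?_ m
  rw [pow_mul', ← prod_const]
  refine Majorizes.prod fun j hj =>
    (Majorizes.sum fun r _ => (Majorizes.C_mul_X (a := -e j) ?_).pow r).pow m
  rw [abs_neg]
  exact hb j hj

variable {x w : K}

theorem eval_C_inv_two_mul_mul_X_self (hx : x ≠ 0) : (C (2 * x)⁻¹ * X).eval x = 2⁻¹ := by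
  rw [eval_mul, eval_C, eval_X]; field_simp

theorem abs_eval_nodePoly_mul_nodePolyInv_sub_one_le (hx : 0 < x) (he : ∀ j ∈ S, |e j| ≤ (2 * x)⁻¹)
    (m : ℕ) (hw : |w| ≤ x) :
    |(nodePoly S e m).eval w * (nodePolyInv S e m).eval w - 1| ≤
      (|w| / x) ^ m * (3 ^ (S.card * m) + 1) := by
  have hmaj := ((majorizes_nodePoly he m).mul (majorizes_nodePolyInv he m)).sub Majorizes.one
  have h := hmaj.abs_eval_le_of_X_pow_dvd (X_pow_dvd_nodePoly_mul_nodePolyInv_sub_one S e m) hx hw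
  simp only [eval_sub, eval_mul, eval_one, eval_add, eval_pow, eval_finsetSum,
    eval_C_inv_two_mul_mul_X_self hx.ne'] at h
  refine h.trans (mul_le_mul_of_nonneg_left ?_ (by positivity))
  have hgeom : (∑ r ∈ range m, (2⁻¹ : K) ^ r) ^ (S.card * m) ≤ 2 ^ (S.card * m) :=
    pow_le_pow_left₀ (sum_nonneg fun _ _ => by positivity) (geom_sum_inv_two_le m) _
  calc (1 + 2⁻¹) ^ (S.card * m) * (∑ r ∈ range m, (2⁻¹ : K) ^ r) ^ (S.card * m) + 1
      ≤ (1 + 2⁻¹) ^ (S.card * m) * 2 ^ (S.card * m) + 1 := by gcongr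
    _ = 3 ^ (S.card * m) + 1 := by rw [← mul_pow]; norm_num

theorem abs_eval_nodePolyInv_le (hx : 0 < x) (he : ∀ j ∈ S, |e j| ≤ (2 * x)⁻¹) (m : ℕ)
    (hw : x ≤ |w|) : |(nodePolyInv S e m).eval w| ≤ (|w| / x) ^ (m - 1) * 2 ^ (S.card * m) := by
  have h := (majorizes_nodePolyInv he m).abs_eval_le_of_natDegree_le
    (natDegree_nodePolyInv_le S e m) hx hw
  simp only [eval_pow, eval_finsetSum, eval_C_inv_two_mul_mul_X_self hx.ne'] at h
  exact h.trans (mul_le_mul_of_nonneg_left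
    (pow_le_pow_left₀ (sum_nonneg fun _ _ => by positivity) (geom_sum_inv_two_le m) _)
    (by positivity))

end NodePolyBounds

section HermiteBasis

variable [Fintype ι] [DecidableEq ι] {F : Type*} [Field F]

/-- The polynomial of degree `< m * card ι` that is `≡ 1` to order `m` at `c i` and vanishes to
order `m` at every other node `c j`. -/
noncomputable def hermiteBasis (c : ι → F) (m : ℕ) (i : ι) : F[X] :=
  (nodePoly (univ.erase i) (fun j => (c i - c j)⁻¹) m *
    nodePolyInv (univ.erase i) (fun j => (c i - c j)⁻¹) m).comp (X - C (c i))

theorem natDegree_hermiteBasis_le (c : ι → F) (m : ℕ) (i : ι) :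
    (hermiteBasis c m i).natDegree ≤ Fintype.card ι * m - 1 := by
  have hB := natDegree_nodePoly_le (univ.erase i) (fun j => (c i - c j)⁻¹) m
  have hT := natDegree_nodePolyInv_le (univ.erase i) (fun j => (c i - c j)⁻¹) m
  rw [card_erase_of_mem (mem_univ i), card_univ, Nat.sub_one_mul] at hB
  have hm : m ≤ Fintype.card ι * m := Nat.le_mul_of_pos_left m (Fintype.card_pos_iff.mpr ⟨i⟩)
  rw [hermiteBasis, natDegree_comp, natDegree_X_sub_C, mul_one]
  refine (natDegree_mul_le.trans (add_le_add hB hT)).trans ?_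
  obtain rfl | _ := m.eq_zero_or_pos
  · simp
  · omega

theorem eval_hermiteBasis {c : ι → F} {i : ι} (m : ℕ) (t : F) : (hermiteBasis c m i).eval t =
    (nodePoly (univ.erase i) (fun j => (c i - c j)⁻¹) m).eval (t - c i) *
      (nodePolyInv (univ.erase i) (fun j => (c i - c j)⁻¹) m).eval (t - c i) := by
  rw [hermiteBasis, eval_comp, eval_mul, eval_sub, eval_X, eval_C]

theorem eval_nodePoly_sub {c : ι → F} {i : ι} (hc : ∀ j, j ≠ i → c i ≠ c j) (m : ℕ) (t : F) :
    (nodePoly (univ.erase i) (fun j => (c i - c j)⁻¹) m).eval (t - c i) =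
      ∏ j ∈ univ.erase i, ((t - c j) / (c i - c j)) ^ m := by
  rw [nodePoly, eval_prod]
  refine prod_congr rfl fun j hj => ?_
  have : c i - c j ≠ 0 := sub_ne_zero.mpr (hc j (ne_of_mem_erase hj))
  rw [eval_pow, eval_add, eval_one, eval_mul, eval_C, eval_X]
  field_simp
  ring

variable {c : ι → K} {σ : K} {i : ι} (hσ : 0 < σ) (hsep : ∀ j, j ≠ i → σ ≤ |c i - c j|)
include hσ hsep

theorem abs_inv_sub_le (j : ι) (hj : j ∈ univ.erase i) : |(c i - c j)⁻¹| ≤ (2 * (σ / 2))⁻¹ := by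
  rw [abs_inv, mul_div_cancel₀ σ two_ne_zero]
  exact inv_anti₀ hσ (hsep j (ne_of_mem_erase hj))

theorem abs_eval_hermiteBasis_sub_one_le (m : ℕ) {t : K} (ht : |t - c i| ≤ σ / 2) :
    |(hermiteBasis c m i).eval t - 1| ≤
      (|t - c i| / (σ / 2)) ^ m * (3 ^ (Fintype.card ι * m) + 1) := by
  rw [eval_hermiteBasis]
  refine (abs_eval_nodePoly_mul_nodePolyInv_sub_one_le (half_pos hσ) (abs_inv_sub_le hσ hsep) m
    ht).trans ?_
  gcongr
  · norm_num
  · exact card_le_univ _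

theorem abs_eval_hermiteBasis_le (m : ℕ) {t : K} (ht : σ / 2 ≤ |t - c i|) :
    |(hermiteBasis c m i).eval t| ≤ (∏ j ∈ univ.erase i, (|t - c j| / |c i - c j|) ^ m) *
      ((|t - c i| / (σ / 2)) ^ (m - 1) * 2 ^ (Fintype.card ι * m)) := by
  have hc : ∀ j, j ≠ i → c i ≠ c j := fun j hj h => by
    have := hsep j hj; rw [h, sub_self, abs_zero] at this; linarith
  rw [eval_hermiteBasis, eval_nodePoly_sub hc, abs_mul, abs_prod]
  simp only [abs_pow, abs_div]
  gcongr
  refine (abs_eval_nodePolyInv_le (half_pos hσ) (abs_inv_sub_le hσ hsep) m ht).trans ?_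
  gcongr
  · norm_num
  · exact card_le_univ _

end HermiteBasis

section StepInterpolation

variable [Fintype ι] [DecidableEq ι] {F : Type*} [Field F]

noncomputable def hermiteInterpolant (c : ι → F) (m : ℕ) (y : ι → F) :
    F[X] :=
  ∑ i, C (y i) * hermiteBasis c m i

theorem natDegree_hermiteInterpolant_le (c : ι → F) (m : ℕ) (y : ι → F) :
    (hermiteInterpolant c m y).natDegree ≤ Fintype.card ι * m - 1 :=
  natDegree_sum_le_of_forall_le _ _ fun i _ =>
    (natDegree_C_mul_le _ _).trans (natDegree_hermiteBasis_le c m i)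

variable {c : ι → K} {σ δ D t : K} {i k : ι}

theorem abs_eval_hermiteBasis_sub_one_le_of_near (hσ : 0 < σ) (hsep : ∀ j, j ≠ i → σ ≤ |c i - c j|)
    (hδσ : 4 * δ ≤ σ) (ht : |t - c i| ≤ 2 * δ) {m : ℕ} (hm : m ≠ 0) :
    |(hermiteBasis c m i).eval t - 1| ≤ (8 * 3 ^ Fintype.card ι * (δ / σ)) ^ m := by
  set N := Fintype.card ι
  have hδ : 0 ≤ δ := by linarith [abs_nonneg (t - c i)]
  have hratio : |t - c i| / (σ / 2) ≤ 4 * (δ / σ) := by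
    rw [div_le_iff₀ (half_pos hσ)]
    field_simp
    linarith
  have hthree : (3 : K) ^ (N * m) + 1 ≤ (2 * 3 ^ N) ^ m := by
    rw [mul_pow, ← pow_mul, mul_comm N m]
    have h2 : (2 : K) ≤ 2 ^ m := by
      simpa using pow_le_pow_right₀ one_le_two (Nat.one_le_iff_ne_zero.mpr hm)
    nlinarith [one_le_pow₀ (M₀ := K) (a := 3) (n := m * N) (by norm_num)]
  calc |(hermiteBasis c m i).eval t - 1| ≤ (|t - c i| / (σ / 2)) ^ m * (3 ^ (N * m) + 1) :=
        abs_eval_hermiteBasis_sub_one_le hσ hsep m (by linarith)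
    _ ≤ (4 * (δ / σ)) ^ m * (2 * 3 ^ N) ^ m := by gcongr
    _ = (8 * 3 ^ N * (δ / σ)) ^ m := by rw [← mul_pow]; ring

theorem abs_eval_hermiteBasis_le_of_near_other (hσ : 0 < σ)
    (hsep : ∀ j, j ≠ i → σ ≤ |c i - c j|) (hki : k ≠ i) (hδσ : 4 * δ ≤ σ)
    (ht : |t - c k| ≤ 2 * δ) (hD : ∀ j, |t - c j| ≤ D) (m : ℕ) :
    |(hermiteBasis c m i).eval t| ≤ ((4 * D / σ) ^ (Fintype.card ι + 1) * (δ / σ)) ^ m := by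
  set N := Fintype.card ι
  set ρ := 2 * D / σ
  have hδ : 0 ≤ δ := by linarith [abs_nonneg (t - c k)]
  have hti : σ / 2 ≤ |t - c i| := by
    have := (hsep k hki).trans (abs_sub_le (c i) t (c k))
    rw [abs_sub_comm] at this
    linarith
  have hρ : 1 ≤ ρ := by
    rw [le_div_iff₀ hσ]; linarith [hD i]
  have hfactor (j : ι) (hj : j ∈ univ.erase i) : |t - c j| / |c i - c j| ≤ ρ :=
    (div_le_div₀ ((abs_nonneg _).trans (hD j)) (hD j) hσ (hsep j (ne_of_mem_erase hj))).trans
      (div_le_div_of_nonneg_right (by linarith [abs_nonneg (t - c j), hD j]) hσ.le)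
  have hprod : ∏ j ∈ univ.erase i, |t - c j| / |c i - c j| ≤ 2 * (δ / σ) * ρ ^ N := by
    rw [← mul_prod_erase _ _ (mem_erase.mpr ⟨hki, mem_univ k⟩), ← mul_div_assoc]
    have hk : |t - c k| / |c i - c k| ≤ 2 * δ / σ := div_le_div₀ (by positivity) ht hσ (hsep k hki)
    have hrest : ∏ j ∈ (univ.erase i).erase k, |t - c j| / |c i - c j| ≤ ρ ^ N :=
      calc _ ≤ ∏ _j ∈ (univ.erase i).erase k, ρ :=
            prod_le_prod (fun _ _ => by positivity) fun j hj => hfactor j (mem_of_mem_erase hj)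
        _ ≤ ρ ^ N := by rw [prod_const]; exact pow_le_pow_right₀ hρ (card_le_univ _)
    exact mul_le_mul hk hrest (prod_nonneg fun _ _ => by positivity) (by positivity)
  have hT : (|t - c i| / (σ / 2)) ^ (m - 1) ≤ ρ ^ m := by
    have hratio : |t - c i| / (σ / 2) ≤ ρ := by
      rw [div_div_eq_mul_div, mul_comm]
      exact div_le_div_of_nonneg_right (by linarith [hD i]) hσ.le
    exact (pow_le_pow_left₀ (by positivity) hratio _).trans (pow_le_pow_right₀ hρ (Nat.sub_le m 1))
  calc |(hermiteBasis c m i).eval t|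
      ≤ (∏ j ∈ univ.erase i, (|t - c j| / |c i - c j|) ^ m) *
          ((|t - c i| / (σ / 2)) ^ (m - 1) * 2 ^ (N * m)) :=
        abs_eval_hermiteBasis_le hσ hsep m hti
    _ ≤ (2 * (δ / σ) * ρ ^ N) ^ m * (ρ ^ m * 2 ^ (N * m)) := by
        rw [prod_pow]
        gcongr
    _ = ((4 * D / σ) ^ (N + 1) * (δ / σ)) ^ m := by
        rw [pow_mul, ← mul_pow, ← mul_pow, show 4 * D / σ = 2 * ρ by simp only [ρ]; ring]
        clear_value ρ
        ring

theorem abs_eval_hermiteInterpolant_sub_le (hσ : 0 < σ) (hsep : Pairwise fun i j => σ ≤ |c i - c j|)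
    (hδσ : 4 * δ ≤ σ) {y : ι → K} (hy : ∀ i, |y i| ≤ 1) (ht : |t - c k| ≤ 2 * δ)
    (hD : ∀ j, |t - c j| ≤ D) {m : ℕ} (hm : m ≠ 0) :
    |(hermiteInterpolant c m y).eval t - y k| ≤ Fintype.card ι *
      ((8 * 3 ^ Fintype.card ι + (4 * D / σ) ^ (Fintype.card ι + 1)) * (δ / σ)) ^ m := by
  have hδ : 0 ≤ δ := by linarith [abs_nonneg (t - c k)]
  have hD₀ : 0 ≤ D := (abs_nonneg _).trans (hD k)
  rw [hermiteInterpolant, eval_finsetSum]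
  simp only [eval_mul, eval_C]
  refine abs_sum_mul_sub_le k hy fun i => ?_
  split_ifs with hik
  · subst hik
    refine (abs_eval_hermiteBasis_sub_one_le_of_near hσ (fun j hj => hsep hj.symm) hδσ ht
      hm).trans ?_
    gcongr
    exact le_add_of_nonneg_right (by positivity)
  · rw [sub_zero]
    refine (abs_eval_hermiteBasis_le_of_near_other hσ (fun j hj => hsep hj.symm) (Ne.symm hik)
      hδσ ht hD m).trans ?_
    gcongr
    exact le_add_of_nonneg_left (by positivity)

end StepInterpolation

end Polynomial

noncomputable def smallDeltaConst (s : ℕ) (u : ℝ) : ℝ := s * (8 * 3 ^ s + (4 / u) ^ (s + 1)) / u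

theorem one_le_smallDeltaConst_mul {s : ℕ} (hs : 1 ≤ s) {u x : ℝ} (hu : 0 < u) (hx : u ≤ 4 * x) :
    1 ≤ smallDeltaConst s u * x := by
  have h3 : (1 : ℝ) ≤ 3 ^ s := one_le_pow₀ (by norm_num)
  have hs' : (1 : ℝ) ≤ s := by exact_mod_cast hs
  calc 1 ≤ s * (8 * 3 ^ s + (4 / u) ^ (s + 1)) / 4 := by
        rw [le_div_iff₀ (by norm_num)]
        nlinarith [pow_nonneg (div_pos four_pos hu).le (s + 1)]
    _ = smallDeltaConst s u * (u / 4) := by rw [smallDeltaConst]; field_simp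
    _ ≤ smallDeltaConst s u * x := by
      gcongr
      · exact div_nonneg (by positivity) hu.le
      · linarith

theorem card_mul_pow_le_smallDeltaConst_pow {s m : ℕ} (hs : 1 ≤ s) (hm : m ≠ 0) {u σ δ D : ℝ}
    (hu : 0 < u) (hσ : 0 < σ) (hδ : 0 ≤ δ) (hD : 0 < D) (huD : u * D ≤ σ) :
    s * ((8 * 3 ^ s + (4 * D / σ) ^ (s + 1)) * (δ / σ)) ^ m ≤
      (smallDeltaConst s u * δ / D) ^ m := by
  have hconst : 4 * D / σ ≤ 4 / u := by
    rw [div_le_div_iff₀ hσ hu]; linarith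
  have hratio : δ / σ ≤ δ / D / u := by
    rw [div_div, mul_comm D u]; exact div_le_div_of_nonneg_left hδ (by positivity) huD
  calc (s : ℝ) * ((8 * 3 ^ s + (4 * D / σ) ^ (s + 1)) * (δ / σ)) ^ m
      ≤ s ^ m * ((8 * 3 ^ s + (4 / u) ^ (s + 1)) * (δ / D / u)) ^ m := by
        gcongr
        exact le_self_pow₀ (by exact_mod_cast hs) hm
    _ = (smallDeltaConst s u * δ / D) ^ m := by rw [← mul_pow, smallDeltaConst]; ring

theorem small_delta_En_bound (s : ℕ) (hs : 1 ≤ s) (u : ℝ) (hu : 0 < u) :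
    ∃ C : ℝ, ∀ (a b : Fin s → ℝ) (σ δ D : ℝ),
      (∀ i, a i ≤ b i) →
      (Pairwise fun i j => Disjoint (Set.Icc (a i) (b i)) (Set.Icc (a j) (b j))) →
      0 < σ →
      (∀ i j : Fin s, i ≠ j → ∀ x ∈ Set.Icc (a i) (b i), ∀ t ∈ Set.Icc (a j) (b j),
        σ ≤ |x - t|) →
      0 < δ →
      (∀ i, b i - a i ≤ 2 * δ) →
      0 < D →
      (∀ x ∈ ⋃ i, Set.Icc (a i) (b i), ∀ t ∈ ⋃ i, Set.Icc (a i) (b i), |x - t| ≤ D) →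
      u ≤ σ / D →
      ∀ (y : Fin s → ℝ), (∀ i, y i ∈ Set.Icc (-1 : ℝ) 1) →
      ∀ n : ℕ,
        ∃ P : Polynomial ℝ, P.natDegree ≤ n ∧
          ∀ i, ∀ t ∈ Set.Icc (a i) (b i),
            |P.eval t - y i| ≤ (C * δ / D) ^ ((n + 1) / s) := by
  refine ⟨smallDeltaConst s u, fun a b σ δ D hab _ hσ hgap hδ hlen hD hdiam huσ y hy n => ?_⟩
  set m := (n + 1) / s
  have hy' (i : Fin s) : |y i| ≤ 1 := abs_le.mpr (hy i)
  have huD : u * D ≤ σ := (le_div_iff₀ hD).mp huσ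
  rcases eq_or_ne m 0 with hm | hm
  · exact ⟨0, by simp, fun i t _ => by simpa [hm] using hy' i⟩
  rcases lt_or_ge σ (4 * δ) with hδσ | hδσ
  · have hC : 1 ≤ smallDeltaConst s u * δ / D := by
      rw [mul_div_assoc]
      exact one_le_smallDeltaConst_mul hs hu (by rw [mul_div_assoc', le_div_iff₀ hD]; linarith)
    exact ⟨0, by simp, fun i t _ => by simpa using (hy' i).trans (one_le_pow₀ hC)⟩
  have hleft (j : Fin s) : a j ∈ Set.Icc (a j) (b j) := Set.left_mem_Icc.mpr (hab j)
  refine ⟨hermiteInterpolant a m y, ?_, fun k t ht => ?_⟩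
  · have : m * s ≤ n + 1 := Nat.div_mul_le_self (n + 1) s
    refine (natDegree_hermiteInterpolant_le a m y).trans ?_
    rw [Fintype.card_fin, mul_comm]
    omega
  have hsep : Pairwise fun i j => σ ≤ |a i - a j| := fun i j hij =>
    hgap i j hij _ (hleft i) _ (hleft j)
  have htk : |t - a k| ≤ 2 * δ := by
    rw [abs_of_nonneg (by linarith [ht.1])]; linarith [ht.2, hlen k]
  have htD (j : Fin s) : |t - a j| ≤ D :=
    hdiam t (Set.mem_iUnion.mpr ⟨k, ht⟩) (a j) (Set.mem_iUnion.mpr ⟨j, hleft j⟩)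
  have hbound := abs_eval_hermiteInterpolant_sub_le hσ hsep hδσ hy' htk htD hm
  rw [Fintype.card_fin] at hbound
  exact hbound.trans (card_mul_pow_le_smallDeltaConst_pow hs hm hu hσ hδ.le hD huD)
end
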